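/- arXiv:1403.2499 — 10 statements merged into one kernel-verified Lean document; each statement's English description precedes it below -/
import Mathlib

section
/- Let q be a prime power, let n be a positive integer with gcd(n,q)=1, and let α, β be nonzero elements of F_{q²}. If C₁ is a nontrivial α-constacyclic code of length n over F_{q²}, C₂ is a nontrivial β-constacyclic code of length n over F_{q²}, and C₁ ⊆ C₂, then α = β. -/
/-- `C` is a `lam`-constacyclic code of length `n` over `F`: whenever
`(c₀, …, c_{n-1}) ∈ C`, also `(lam * c_{n-1}, c₀, …, c_{n-2}) ∈ C`. -/
def IsConstacyclic {F : Type} [Field F] {n : ℕ} (lam : F) (C : Submodule F (Fin n → F)) : Prop :=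
  ∀ c ∈ C, (fun i : Fin n =>
    if _ : (i : ℕ) = 0 then lam * c ⟨n - 1, Nat.sub_lt i.pos one_pos⟩
    else c ⟨(i : ℕ) - 1, by have := i.isLt; omega⟩) ∈ C

lemma exists_last_ne_zero {F : Type} [Field F] {n : ℕ} (lam : F)
    (C : Submodule F (Fin n → F)) (hC : IsConstacyclic lam C) :
    ∀ k : ℕ, ∀ c ∈ C, ∀ j : Fin n, n - 1 - (j : ℕ) = k → c j ≠ 0 →
      ∃ c' ∈ C, c' ⟨n - 1, Nat.sub_lt j.pos one_pos⟩ ≠ 0 := by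
  intro k
  induction k with
  | zero =>
    intro c hc j hjk hj
    refine ⟨c, hc, ?_⟩
    have hj' : (j : ℕ) = n - 1 := by have := j.isLt; omega
    have : (⟨n - 1, Nat.sub_lt j.pos one_pos⟩ : Fin n) = j := by
      exact Fin.ext hj'.symm
    rw [this]; exact hj
  | succ k ih =>
    intro c hc j hjk hj
    have hjlt : (j : ℕ) + 1 < n := by have := j.isLt; omega
    have hmem := hC c hc
    have h := ih _ hmem ⟨(j : ℕ) + 1, hjlt⟩ (by simp; omega) ?_
    · obtain ⟨c', hc', hne⟩ := h
      exact ⟨c', hc', hne⟩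
    · simp only []
      rw [dif_neg (by simp)]
      have : (⟨(j : ℕ) + 1 - 1, by omega⟩ : Fin n) = j := by
        exact Fin.ext (by simp)
      rw [this]; exact hj

lemma single_mem_of_constacyclic {F : Type} [Field F] {n : ℕ} (hn : 0 < n) (lam : F)
    (C : Submodule F (Fin n → F)) (hC : IsConstacyclic lam C)
    (h0 : Pi.single (⟨0, hn⟩ : Fin n) (1 : F) ∈ C) :
    ∀ k (hk : k < n), Pi.single (⟨k, hk⟩ : Fin n) (1 : F) ∈ C := by
  intro k
  induction k with
  | zero => intro hk; exact h0
  | succ k ih =>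
    intro hk
    have hk' : k < n := by omega
    have hmem := hC _ (ih hk')
    have heq : (fun i : Fin n =>
        if _ : (i : ℕ) = 0 then lam * (Pi.single (⟨k, hk'⟩ : Fin n) (1 : F) : Fin n → F)
            ⟨n - 1, Nat.sub_lt i.pos one_pos⟩
        else (Pi.single (⟨k, hk'⟩ : Fin n) (1 : F) : Fin n → F)
          ⟨(i : ℕ) - 1, by have := i.isLt; omega⟩)
        = Pi.single (⟨k + 1, hk⟩ : Fin n) (1 : F) := by
      funext i
      by_cases hi : (i : ℕ) = 0
      · rw [dif_pos hi]
        have h1 : (Pi.single (⟨k, hk'⟩ : Fin n) (1 : F) : Fin n → F) ⟨n - 1, Nat.sub_lt i.pos one_pos⟩ = 0 := by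
          rw [Pi.single_apply, if_neg]
          simp only [Fin.ext_iff]
          omega
        have h2 : (Pi.single (⟨k + 1, hk⟩ : Fin n) (1 : F) : Fin n → F) i = 0 := by
          rw [Pi.single_apply, if_neg]
          simp only [Fin.ext_iff]
          omega
        rw [h1, h2, mul_zero]
      · rw [dif_neg hi]
        rw [Pi.single_apply, Pi.single_apply]
        simp only [Fin.ext_iff]
        have := i.isLt
        split_ifs with ha hb hb <;> first | rfl | (exfalso; omega)
    rw [heq] at hmem
    exact hmem

theorem nontrivial_constacyclic_subset_implies_eq
    {q n : ℕ} (hq : IsPrimePow q) (hn : 0 < n) (hgcd : Nat.gcd n q = 1)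
    {F : Type} [Field F] [Fintype F] (hF : Fintype.card F = q ^ 2)
    (α β : F) (hα : α ≠ 0) (hβ : β ≠ 0)
    (C₁ C₂ : Submodule F (Fin n → F))
    (h1 : IsConstacyclic α C₁) (h2 : IsConstacyclic β C₂)
    (h1nt : C₁ ≠ ⊥ ∧ C₁ ≠ ⊤) (h2nt : C₂ ≠ ⊥ ∧ C₂ ≠ ⊤)
    (hsub : C₁ ≤ C₂) : α = β := by
  by_contra hab
  -- get a nonzero codeword in C₁
  obtain ⟨c, hcC, hc0⟩ := Submodule.ne_bot_iff C₁ |>.mp h1nt.1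
  obtain ⟨j, hj⟩ : ∃ j, c j ≠ 0 := by
    by_contra h
    push_neg at h
    exact hc0 (funext h)
  -- get a codeword of C₁ with nonzero last coordinate
  obtain ⟨c', hc'C, hc'⟩ := exists_last_ne_zero α C₁ h1 (n - 1 - (j : ℕ)) c hcC j rfl hj
  -- shifts
  have hA : (fun i : Fin n =>
      if _ : (i : ℕ) = 0 then α * c' ⟨n - 1, Nat.sub_lt i.pos one_pos⟩
      else c' ⟨(i : ℕ) - 1, by have := i.isLt; omega⟩) ∈ C₂ := hsub (h1 c' hc'C)
  have hB : (fun i : Fin n =>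
      if _ : (i : ℕ) = 0 then β * c' ⟨n - 1, Nat.sub_lt i.pos one_pos⟩
      else c' ⟨(i : ℕ) - 1, by have := i.isLt; omega⟩) ∈ C₂ := h2 c' (hsub hc'C)
  have hd := C₂.sub_mem hA hB
  set s : F := (α - β) * c' ⟨n - 1, Nat.sub_lt hn one_pos⟩ with hs
  have hsne : s ≠ 0 := mul_ne_zero (sub_ne_zero.mpr hab) hc'
  have hdeq : ((fun i : Fin n =>
      if _ : (i : ℕ) = 0 then α * c' ⟨n - 1, Nat.sub_lt i.pos one_pos⟩
      else c' ⟨(i : ℕ) - 1, by have := i.isLt; omega⟩)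
      - fun i : Fin n =>
      if _ : (i : ℕ) = 0 then β * c' ⟨n - 1, Nat.sub_lt i.pos one_pos⟩
      else c' ⟨(i : ℕ) - 1, by have := i.isLt; omega⟩)
      = s • (Pi.single (⟨0, hn⟩ : Fin n) (1 : F) : Fin n → F) := by
    funext i
    simp only [Pi.sub_apply, Pi.smul_apply, Pi.single_apply, smul_eq_mul]
    by_cases hi : (i : ℕ) = 0
    · rw [dif_pos hi, dif_pos hi, if_pos (Fin.ext hi)]
      ring
    · rw [dif_neg hi, dif_neg hi, if_neg (fun h => hi (by simpa [Fin.ext_iff] using h))]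
      ring
  rw [hdeq] at hd
  have he0 : Pi.single (⟨0, hn⟩ : Fin n) (1 : F) ∈ C₂ := by
    have := C₂.smul_mem s⁻¹ hd
    rwa [smul_smul, inv_mul_cancel₀ hsne, one_smul] at this
  have hall := single_mem_of_constacyclic hn β C₂ h2 he0
  apply h2nt.2
  rw [eq_top_iff]
  intro x _
  have hx : x = ∑ i : Fin n, x i • (Pi.single i (1 : F) : Fin n → F) := by
    funext j
    simp [Pi.single_apply, Finset.sum_ite_eq', mul_comm]
  rw [hx]
  refine Submodule.sum_mem _ fun i _ => Submodule.smul_mem _ _ ?_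
  have := hall (i : ℕ) i.isLt
  simpa using this
end

section
/- Let q be a prime power, let n be a positive integer with gcd(n,q)=1, and let λ ∈ F_{q²}* have multiplicative order r. If there exists a nontrivial Hermitian dual-containing λ-constacyclic code of length n over F_{q²}, then λ = (λ^q)^{−1}, i.e., r divides q+1. -/
/-- The Hermitian dual of a code `C` over `F = F_{q²}`. -/
def hermDual (q : ℕ) {F : Type} [Field F] {n : ℕ} (C : Submodule F (Fin n → F)) :
    Set (Fin n → F) :=
  {x | ∀ y ∈ C, ∑ i, x i * (y i) ^ q = 0}

/-- The constacyclic shift map. -/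
def shiftF {F : Type} [Field F] {n : ℕ} (lam : F) (c : Fin n → F) : Fin n → F :=
  fun i : Fin n =>
    if _ : (i : ℕ) = 0 then lam * c ⟨n - 1, Nat.sub_lt i.pos one_pos⟩
    else c ⟨(i : ℕ) - 1, by have := i.isLt; omega⟩

section lemmas

variable {F : Type} [Field F] {m : ℕ}

lemma shiftF_zero (μ : F) (c : Fin (m + 1) → F) :
    shiftF μ c 0 = μ * c (Fin.last m) := by
  simp only [shiftF]
  rw [dif_pos (by simp)]
  rfl

lemma shiftF_succ (μ : F) (c : Fin (m + 1) → F) (i : Fin m) :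
    shiftF μ c i.succ = c i.castSucc := by
  simp only [shiftF, Fin.val_succ]
  rw [dif_neg (Nat.succ_ne_zero _)]
  rfl

lemma shiftF_ne (μ : F) (c : Fin (m + 1) → F) (i : Fin (m + 1)) (h : (i : ℕ) ≠ 0)
    (h2 : (i : ℕ) - 1 < m + 1) :
    shiftF μ c i = c ⟨(i : ℕ) - 1, h2⟩ := by
  simp only [shiftF]
  rw [dif_neg h]

lemma shiftF_key_sum (q : ℕ) (μ lam : F) (h : μ * lam ^ q = 1) (x z : Fin (m + 1) → F) :
    ∑ i, shiftF μ x i * (shiftF lam z i) ^ q = ∑ i, x i * (z i) ^ q := by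
  rw [Fin.sum_univ_succ]
  conv_rhs => rw [Fin.sum_univ_castSucc]
  simp only [shiftF_zero, shiftF_succ]
  have : μ * x (Fin.last m) * (lam * z (Fin.last m)) ^ q
      = x (Fin.last m) * z (Fin.last m) ^ q := by
    rw [mul_pow]
    calc μ * x (Fin.last m) * (lam ^ q * z (Fin.last m) ^ q)
        = (μ * lam ^ q) * (x (Fin.last m) * z (Fin.last m) ^ q) := by ring
      _ = x (Fin.last m) * z (Fin.last m) ^ q := by rw [h, one_mul]
  rw [this, add_comm]

lemma shiftF_inj (μ : F) (hμ : μ ≠ 0) : Function.Injective (shiftF (n := m + 1) μ) := by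
  intro a b hab
  funext i
  refine Fin.lastCases ?_ ?_ i
  · have := congrFun hab 0
    rw [shiftF_zero, shiftF_zero] at this
    exact mul_left_cancel₀ hμ this
  · intro k
    have := congrFun hab k.succ
    rwa [shiftF_succ, shiftF_succ] at this

lemma shiftF_diff (μ ν : F) (c : Fin (m + 1) → F) :
    shiftF μ c - shiftF ν c
      = ((μ - ν) * c (Fin.last m)) • (fun j => if (0 : Fin (m + 1)) = j then (1 : F) else 0) := by
  funext i
  refine Fin.cases ?_ ?_ i
  · simp [shiftF_zero, sub_mul]
  · intro k
    simp [shiftF_succ, (Fin.succ_ne_zero k).symm]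

lemma shiftF_single (lam : F) (j : Fin m) :
    shiftF lam (fun t => if j.castSucc = t then (1 : F) else 0)
      = fun t => if j.succ = t then (1 : F) else 0 := by
  funext i
  refine Fin.cases ?_ ?_ i
  · rw [shiftF_zero]
    simp [(Fin.castSucc_lt_last j).ne, Fin.succ_ne_zero]
  · intro k
    rw [shiftF_succ]
    simp [Fin.castSucc_inj, Fin.succ_inj]

/-- The shift preserves a constacyclic code surjectively. -/
lemma shiftF_surjOn {F : Type} [Field F] [Fintype F] {m : ℕ} (μ : F) (hμ : μ ≠ 0)
    (C : Submodule F (Fin (m + 1) → F)) (hC : ∀ c ∈ C, shiftF μ c ∈ C)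
    {y : Fin (m + 1) → F} (hy : y ∈ C) : ∃ z ∈ C, shiftF μ z = y := by
  let f : C → C := fun c => ⟨shiftF μ c.1, hC _ c.2⟩
  have hf : Function.Injective f := by
    intro a b hab
    exact Subtype.ext (shiftF_inj μ hμ (congrArg Subtype.val hab))
  have hsurj : Function.Surjective f := Finite.surjective_of_injective hf
  obtain ⟨z, hz⟩ := hsurj ⟨y, hy⟩
  exact ⟨z.1, z.2, congrArg Subtype.val hz⟩

end lemmas

theorem dual_containing_implies_order_dvd
    {q n r : ℕ} (hq : IsPrimePow q) (hn : 0 < n) (hgcd : Nat.gcd n q = 1)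
    {F : Type} [Field F] [Fintype F] (hF : Fintype.card F = q ^ 2)
    (lam : F) (hlam : lam ≠ 0) (hord : orderOf lam = r)
    (hex : ∃ C : Submodule F (Fin n → F),
      IsConstacyclic lam C ∧ C ≠ ⊥ ∧ C ≠ ⊤ ∧ hermDual q C ⊆ (C : Set (Fin n → F))) :
    lam = (lam ^ q)⁻¹ ∧ r ∣ q + 1 := by
  obtain ⟨C, hconst, hbot, htop, hsub⟩ := hex
  obtain ⟨m, rfl⟩ : ∃ m, n = m + 1 := ⟨n - 1, by omega⟩
  have hconst' : ∀ c ∈ C, shiftF lam c ∈ C := hconst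
  -- characteristic setup
  obtain ⟨p, k, hp, hk, hqpk⟩ := hq
  have hpnat : p.Prime := hp.nat_prime
  haveI : CharP F (ringChar F) := ringChar.charP F
  obtain ⟨nn, hp', hcard⟩ := FiniteField.card F (ringChar F)
  have hpeq : ringChar F = p := by
    have h1 : p ^ (k * 2) = ringChar F ^ (nn : ℕ) := by
      rw [← hcard, hF, ← hqpk, ← pow_mul]
    have hdvd : p ∣ ringChar F ^ (nn : ℕ) := by
      rw [← h1]
      exact dvd_pow_self p (by positivity)
    exact ((Nat.prime_dvd_prime_iff_eq hpnat hp').mp (hpnat.dvd_of_dvd_pow hdvd)).symm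
  haveI : CharP F p := hpeq ▸ ringChar.charP F
  haveI : Fact p.Prime := ⟨hpnat⟩
  -- the q-power Frobenius homomorphism
  let φ : F →+* F := iterateFrobenius F p k
  have hφ : ∀ a : F, φ a = a ^ q := by
    intro a
    rw [iterateFrobenius_def, hqpk]
  -- a nonzero element of the Hermitian dual
  obtain ⟨f, hf0, hfmap⟩ :=
    Submodule.exists_dual_map_eq_bot_of_lt_top (lt_top_iff_ne_top.mpr htop) inferInstance
  have hfC : ∀ y ∈ C, f y = 0 := by
    intro y hy
    have : f y ∈ Submodule.map f C := ⟨y, hy, rfl⟩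
    rw [hfmap] at this
    simpa using this
  set w : Fin (m + 1) → F := fun i => f (fun j => if i = j then (1 : F) else 0) with hw
  have hfy : ∀ y : Fin (m + 1) → F, f y = ∑ i, y i * w i := by
    intro y
    conv_lhs => rw [pi_eq_sum_univ y]
    rw [map_sum]
    refine Finset.sum_congr rfl fun i _ => ?_
    rw [map_smul, smul_eq_mul]
  have hwne : w ≠ 0 := by
    intro h
    apply hf0
    apply LinearMap.ext
    intro y
    rw [hfy y, h]
    simp
  obtain ⟨i0, hi0⟩ : ∃ i, w i ≠ 0 := by
    by_contra h
    push_neg at h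
    exact hwne (funext h)
  have hxD : (fun i => (w i) ^ q) ∈ hermDual q C := by
    intro y hy
    have : ∑ i, (w i) ^ q * (y i) ^ q = φ (f y) := by
      rw [hfy y, map_sum]
      refine Finset.sum_congr rfl fun i _ => ?_
      rw [hφ, mul_pow]
      ring
    rw [this, hfC y hy, map_zero]
  have hxne : (fun i => (w i) ^ q) ≠ 0 := by
    intro h
    exact pow_ne_zero q hi0 (congrFun h i0)
  -- the shift by μ = (lam ^ q)⁻¹ preserves the Hermitian dual
  set μ : F := (lam ^ q)⁻¹ with hμdef
  have hμlam : μ * lam ^ q = 1 := inv_mul_cancel₀ (pow_ne_zero q hlam)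
  have hμne : μ ≠ 0 := by
    intro h
    rw [h, zero_mul] at hμlam
    exact zero_ne_one hμlam
  have hD : ∀ x ∈ hermDual q C, shiftF μ x ∈ hermDual q C := by
    intro x hx y hy
    obtain ⟨z, hzC, hz⟩ := shiftF_surjOn lam hlam C hconst' hy
    rw [← hz, shiftF_key_sum q μ lam hμlam x z]
    exact hx z hzC
  -- main claim: lam = μ
  have hmain : lam = μ := by
    by_contra hne
    by_cases hcase : ∃ x ∈ hermDual q C, x (Fin.last m) ≠ 0
    · -- then the unit vector e₀ lies in C, and C = ⊤
      obtain ⟨x, hx, hxlast⟩ := hcase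
      have h1 : shiftF lam x ∈ C := hconst' x (hsub hx)
      have h2 : shiftF μ x ∈ C := hsub (hD x hx)
      have h3 : shiftF lam x - shiftF μ x ∈ C := C.sub_mem h1 h2
      rw [shiftF_diff] at h3
      have hc : (lam - μ) * x (Fin.last m) ≠ 0 :=
        mul_ne_zero (sub_ne_zero.mpr hne) hxlast
      have he0 : (fun j => if (0 : Fin (m + 1)) = j then (1 : F) else 0) ∈ C := by
        have := C.smul_mem ((lam - μ) * x (Fin.last m))⁻¹ h3
        rwa [smul_smul, inv_mul_cancel₀ hc, one_smul] at this
      have heall : ∀ j : Fin (m + 1),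
          (fun t => if j = t then (1 : F) else 0) ∈ C := by
        intro j
        induction j using Fin.induction with
        | zero => exact he0
        | succ i ih =>
          have := hconst' _ ih
          rwa [shiftF_single] at this
      apply htop
      rw [Submodule.eq_top_iff']
      intro y
      rw [pi_eq_sum_univ y]
      exact C.sum_mem fun i _ => C.smul_mem _ (heall i)
    · -- then the Hermitian dual is zero, contradiction
      push_neg at hcase
      have hzero : ∀ j : ℕ, j ≤ m → ∀ x ∈ hermDual q C,
          x ⟨m - j, by omega⟩ = 0 := by
        intro j
        induction j with
        | zero =>
          intro _ x hx
          have := hcase x hx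
          simpa [Fin.last] using this
        | succ j ih =>
          intro hj x hx
          have hmem := hD x hx
          have hj' : j ≤ m := by omega
          have h2 := ih hj' _ hmem
          rw [shiftF_ne μ x ⟨m - j, by omega⟩ (by show m - j ≠ 0; omega)
            (by show m - j - 1 < m + 1; omega)] at h2
          exact h2
      have : (fun i => (w i) ^ q) = 0 := by
        funext i
        have hi : (i : ℕ) ≤ m := by omega
        have := hzero (m - (i : ℕ)) (by omega) _ hxD
        have hidx : (⟨m - (m - (i : ℕ)), by omega⟩ : Fin (m + 1)) = i := by
          apply Fin.ext
          show m - (m - (i : ℕ)) = (i : ℕ)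
          omega
        rw [hidx] at this
        exact this
      exact hxne this
  refine ⟨hmain, ?_⟩
  rw [← hord]
  apply orderOf_dvd_of_pow_eq_one
  rw [pow_succ]
  nth_rewrite 2 [hmain]
  exact mul_inv_cancel₀ (pow_ne_zero q hlam)
end

section
/- Let q be a prime power, let n be a positive integer with gcd(n,q)=1, and let λ ∈ F_{q²}* satisfy λ = (λ^q)^{−1}. Then nontrivial Hermitian dual-containing λ-constacyclic codes of length n over F_{q²} exist if and only if there exists a monic irreducible factor h(X) of X^n − λ in F_{q²}[X] with h(X)^σ ≠ h(X), i.e., at least one conjugate-reciprocal polynomial pair occurs among the monic irreducible factors of X^n − λ over F_{q²}. -/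
open Polynomial

/-- The reciprocal polynomial `f* = f(0)⁻¹ X^{deg f} f(1/X)` of `f`. -/
noncomputable def reciprocal {F : Type} [Field F] (f : F[X]) : F[X] :=
  Polynomial.C (f.coeff 0)⁻¹ * f.reverse

/-- `f^σ`: the polynomial obtained from the reciprocal polynomial `f*` by raising
every coefficient to the `q`-th power. -/
noncomputable def sigmaPoly (q : ℕ) {F : Type} [Field F] (f : F[X]) : F[X] :=
  (reciprocal f).sum fun i a => Polynomial.C (a ^ q) * Polynomial.X ^ i

namespace ConstaAux
variable {F : Type} [Field F] {n : ℕ}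

noncomputable def toPoly (c : Fin n → F) : F[X] := ∑ i : Fin n, C (c i) * X ^ (i : ℕ)

lemma coeff_toPoly (c : Fin n → F) (j : ℕ) :
    (toPoly c).coeff j = if h : j < n then c ⟨j, h⟩ else 0 := by
  rw [toPoly, finset_sum_coeff]
  simp only [coeff_C_mul, coeff_X_pow, mul_ite, mul_one, mul_zero]
  split
  · next h =>
    rw [Finset.sum_eq_single (⟨j, h⟩ : Fin n)]
    · simp
    · intro b _ hb
      simp only [ite_eq_right_iff]
      intro hjb
      exact absurd (Fin.ext hjb.symm : b = ⟨j, h⟩) hb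
    · simp
  · next h =>
    apply Finset.sum_eq_zero
    intro b _
    simp only [ite_eq_right_iff]
    intro hjb
    exact absurd (hjb ▸ b.isLt) h

lemma coeff_toPoly_fin (c : Fin n → F) (i : Fin n) : (toPoly c).coeff i = c i := by
  rw [coeff_toPoly]; simp

lemma degree_toPoly (c : Fin n → F) : (toPoly c).degree < n := by
  rw [degree_lt_iff_coeff_zero]
  intro m hm
  rw [coeff_toPoly]
  simp [Nat.not_lt.mpr hm]

lemma natDegree_toPoly (hn : 0 < n) (c : Fin n → F) : (toPoly c).natDegree ≤ n - 1 := by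
  have := degree_toPoly c
  rcases eq_or_ne (toPoly c) 0 with h | h
  · simp [h]
  · have := natDegree_lt_iff_degree_lt h |>.mpr (by exact_mod_cast this)
    omega

noncomputable def vec (p : F[X]) : Fin n → F := fun i => p.coeff i

lemma toPoly_vec {p : F[X]} (hp : p.degree < n) : toPoly (vec p : Fin n → F) = p := by
  ext j
  rw [coeff_toPoly]
  split
  · rfl
  · next h =>
    exact ((degree_lt_iff_coeff_zero _ _).mp hp j (Nat.not_lt.mp h)).symm

lemma vec_toPoly (c : Fin n → F) : vec (toPoly c) = c := by
  funext i; exact coeff_toPoly_fin c i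

lemma toPoly_injective : Function.Injective (toPoly : (Fin n → F) → F[X]) := by
  intro a b h
  rw [← vec_toPoly a, ← vec_toPoly b, h]

lemma toPoly_add (c d : Fin n → F) : toPoly (c + d) = toPoly c + toPoly d := by
  simp [toPoly, Finset.sum_add_distrib, add_mul, C_add]

lemma toPoly_smul (a : F) (c : Fin n → F) : toPoly (a • c) = C a * toPoly c := by
  simp [toPoly, Finset.mul_sum, mul_assoc, C_mul]

lemma toPoly_zero : toPoly (0 : Fin n → F) = 0 := by simp [toPoly]

noncomputable def toPolyL : (Fin n → F) →ₗ[F] F[X] where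
  toFun := toPoly
  map_add' := toPoly_add
  map_smul' := fun a c => by simp [toPoly_smul, smul_eq_C_mul]

/-- The constacyclic code with generator polynomial `g`. -/
noncomputable def code (g : F[X]) : Submodule F (Fin n → F) where
  carrier := {c | g ∣ toPoly c}
  add_mem' := by
    intro a b ha hb
    simp only [Set.mem_setOf_eq, toPoly_add] at *
    exact dvd_add ha hb
  zero_mem' := by simp [Set.mem_setOf_eq, toPoly_zero]
  smul_mem' := by
    intro a c hc
    simp only [Set.mem_setOf_eq, toPoly_smul] at *
    exact hc.mul_left _

lemma mem_code {g : F[X]} {c : Fin n → F} : c ∈ code g ↔ g ∣ toPoly c := Iff.rfl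

lemma toPoly_shift (hn0 : 0 < n) (lam : F) (c : Fin n → F) :
    toPoly (fun i : Fin n =>
      if _ : (i : ℕ) = 0 then lam * c ⟨n - 1, Nat.sub_lt i.pos one_pos⟩
      else c ⟨(i : ℕ) - 1, by have := i.isLt; omega⟩)
      = X * toPoly c - C (c ⟨n - 1, Nat.sub_lt hn0 one_pos⟩) * (X ^ n - C lam) := by
  ext j
  simp only [coeff_toPoly, coeff_sub, coeff_C_mul, coeff_X_pow, coeff_C]
  cases j with
  | zero =>
    rw [mul_coeff_zero, coeff_X_zero, zero_mul, dif_pos hn0]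
    have hn' : ¬ (0 = n) := by omega
    simp [hn', mul_comm]
  | succ j =>
    rw [coeff_X_mul, coeff_toPoly]
    by_cases hj : j + 1 < n
    · rw [dif_pos hj, dif_pos (by omega : j < n)]
      have h1 : ¬ (j + 1 = n) := by omega
      have h2 : ¬ (j + 1 = 0) := by omega
      simp [h1, h2]
    · rw [dif_neg hj]
      by_cases hj2 : j + 1 = n
      · rw [dif_pos (by omega : j < n)]
        have : c ⟨j, by omega⟩ = c ⟨n-1, Nat.sub_lt hn0 one_pos⟩ := by
          congr 1; exact Fin.ext (by show j = n - 1; omega)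
        simp only [hj2, this, if_pos rfl, dif_neg (by omega : ¬ (j + 1 = 0))]
        rw [if_neg (by omega : ¬ n = 0)]
        simp
      · rw [dif_neg (by omega : ¬ j < n)]
        simp [hj2, (by omega : ¬ (j+1 = 0))]

lemma code_constacyclic (hn0 : 0 < n) {lam : F} {g : F[X]}
    (hg : g ∣ (X ^ n - C lam)) : IsConstacyclic lam (code (n := n) g) := by
  intro c hc
  rw [mem_code, toPoly_shift hn0]
  exact dvd_sub ((mem_code.mp hc).mul_left _) (hg.mul_left _)

lemma code_ne_top (hn0 : 0 < n) {g : F[X]} (hg : ¬ IsUnit g) : code (n := n) g ≠ ⊤ := by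
  intro h
  apply hg
  have h1 : (vec 1 : Fin n → F) ∈ code g := h ▸ Submodule.mem_top
  rw [mem_code, toPoly_vec (by simpa using (by exact_mod_cast hn0 : (0:WithBot ℕ) < n))] at h1
  exact isUnit_of_dvd_one h1

lemma code_ne_bot {g : F[X]} (hg0 : g ≠ 0) (hdeg : g.degree < n) : code (n := n) g ≠ ⊥ := by
  intro h
  have h1 : (vec g : Fin n → F) ∈ code g := by
    rw [mem_code, toPoly_vec hdeg]
  rw [h, Submodule.mem_bot] at h1
  apply hg0
  rw [← toPoly_vec hdeg, h1, toPoly_zero]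

/-- Classification: every constacyclic code is of the form `code g` for a monic
divisor `g` of `X^n - C lam`. -/
lemma exists_generator (hn0 : 0 < n) (lam : F) (M : Submodule F (Fin n → F))
    (hM : IsConstacyclic lam M) :
    ∃ g : F[X], g.Monic ∧ g ∣ (X ^ n - C lam) ∧ M = code g := by
  classical
  set f : F[X] := X ^ n - C lam with hf
  have hfm : f.Monic := monic_X_pow_sub_C _ hn0.ne'
  set S : Submodule F F[X] :=
    Submodule.map (toPolyL (n := n) (F := F)) M ⊔
      (Ideal.span {f}).restrictScalars F with hS
  have hmemS : ∀ p, p ∈ S ↔ ∃ c ∈ M, ∃ t : F[X], p = toPoly c + f * t := by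
    intro p
    rw [hS, Submodule.mem_sup]
    constructor
    · rintro ⟨y, hy, z, hz, rfl⟩
      obtain ⟨c, hc, rfl⟩ := hy
      rw [Submodule.restrictScalars_mem, Ideal.mem_span_singleton] at hz
      obtain ⟨t, rfl⟩ := hz
      exact ⟨c, hc, t, rfl⟩
    · rintro ⟨c, hc, t, rfl⟩
      refine ⟨toPoly c, ⟨c, hc, rfl⟩, f * t, ?_, rfl⟩
      rw [Submodule.restrictScalars_mem, Ideal.mem_span_singleton]
      exact ⟨t, rfl⟩
  have hX : ∀ p ∈ S, X * p ∈ S := by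
    intro p hp
    rw [hmemS] at hp ⊢
    obtain ⟨c, hc, t, rfl⟩ := hp
    refine ⟨_, hM c hc, C (c ⟨n-1, Nat.sub_lt hn0 one_pos⟩) + X * t, ?_⟩
    rw [toPoly_shift hn0 lam c]
    ring
  have hmul : ∀ (p : F[X]), ∀ r ∈ S, p * r ∈ S := by
    intro p
    induction p using Polynomial.induction_on with
    | C a =>
      intro r hr
      rw [← smul_eq_C_mul]
      exact S.smul_mem a hr
    | add p q hp hq =>
      intro r hr
      rw [add_mul]
      exact S.add_mem (hp r hr) (hq r hr)
    | monomial k a ih =>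
      intro r hr
      have heq : C a * X ^ (k+1) * r = X * (C a * X ^ k * r) := by ring
      rw [heq]
      exact hX _ (ih r hr)
  set I : Ideal F[X] :=
    { carrier := S
      add_mem' := fun ha hb => S.add_mem ha hb
      zero_mem' := S.zero_mem
      smul_mem' := fun p r hr => by simpa [smul_eq_mul] using hmul p r hr } with hI
  have hIS : ∀ p : F[X], p ∈ I ↔ p ∈ S := fun p => Iff.rfl
  have hfI : f ∈ I := by
    rw [hIS, hmemS]
    refine ⟨0, M.zero_mem, 1, by rw [toPoly_zero]; ring⟩
  obtain ⟨g0, hg0⟩ := (IsPrincipalIdealRing.principal I).principal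
  have hg0f : g0 ∣ f := by
    have hmem : f ∈ Submodule.span F[X] ({g0} : Set F[X]) := hg0 ▸ hfI
    exact Ideal.mem_span_singleton.mp hmem
  have hg0ne : g0 ≠ 0 := by
    rintro rfl
    exact hfm.ne_zero (zero_dvd_iff.mp hg0f)
  set g : F[X] := g0 * C (leadingCoeff g0)⁻¹ with hgdef
  have hgm : g.Monic := monic_mul_leadingCoeff_inv hg0ne
  have hassoc : Associated g0 g := by
    refine associated_mul_unit_right g0 _ ?_
    exact isUnit_C.mpr (IsUnit.inv (isUnit_iff_ne_zero.mpr (leadingCoeff_ne_zero.mpr hg0ne)))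
  have hmemI : ∀ p : F[X], p ∈ I ↔ g ∣ p := by
    intro p
    constructor
    · intro hp
      have hp' : p ∈ Submodule.span F[X] ({g0} : Set F[X]) := hg0 ▸ hp
      exact hassoc.dvd_iff_dvd_left.mp (Ideal.mem_span_singleton.mp hp')
    · intro hp
      have hp' : p ∈ Submodule.span F[X] ({g0} : Set F[X]) :=
        Ideal.mem_span_singleton.mpr (hassoc.dvd_iff_dvd_left.mpr hp)
      exact hg0.symm ▸ hp'
  refine ⟨g, hgm, ?_, ?_⟩
  · exact (hmemI f).mp hfI
  · ext c
    rw [mem_code, ← hmemI, hIS, hmemS]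
    constructor
    · intro hc
      exact ⟨c, hc, 0, by ring⟩
    · rintro ⟨c', hc', t, heq⟩
      rcases eq_or_ne t 0 with rfl | ht
      · rw [mul_zero, add_zero] at heq
        rwa [toPoly_injective heq]
      · exfalso
        have h1 : f * t = toPoly c - toPoly c' := by rw [heq]; ring
        have h2 : (f * t).degree < n := by
          rw [h1]
          calc (toPoly c - toPoly c').degree ≤ max (toPoly c).degree (toPoly c').degree :=
                degree_sub_le _ _
            _ < n := max_lt (degree_toPoly c) (degree_toPoly c')
        have h3 : (n : WithBot ℕ) ≤ (f * t).degree := by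
          rw [degree_mul, hf, degree_X_pow_sub_C hn0]
          have : (0 : WithBot ℕ) ≤ t.degree := zero_le_degree_iff.mpr ht
          exact le_add_of_nonneg_right this
        exact absurd (lt_of_le_of_lt h3 h2) (lt_irrefl _)


lemma reflect_reflect (N : ℕ) (p : F[X]) : reflect N (reflect N p) = p := by
  ext i
  rw [coeff_reflect, coeff_reflect, revAt_invol]

lemma natDegree_reflect_le {N : ℕ} {p : F[X]} (hp : p.natDegree ≤ N) :
    (reflect N p).natDegree ≤ N := by
  rw [natDegree_le_iff_coeff_eq_zero]
  intro i hi
  rw [coeff_reflect, revAt_eq_self_of_lt hi]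
  exact coeff_eq_zero_of_natDegree_lt (lt_of_le_of_lt hp hi)

section KeyLemma
variable {q : ℕ} (φ : F →+* F) (hφ : ∀ x, φ x = x ^ q)

/-- Key duality computation. -/
lemma mem_hermDual_iff (hφ : ∀ x, φ x = x ^ q) (hn0 : 0 < n) {lam : F} {g m : F[X]}
    (hg : g.Monic) (hm : m.Monic) (hf : X ^ n - C lam = g * m) (x : Fin n → F) :
    x ∈ hermDual q (code (n := n) g) ↔ map φ m ∣ reflect (n-1) (toPoly x) := by
  classical
  set a := reflect (n-1) (toPoly x) with ha
  set g' := map φ g with hg'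
  set m' := map φ m with hm'
  have hgne : g ≠ 0 := hg.ne_zero
  have hmne : m ≠ 0 := hm.ne_zero
  set e := g.natDegree with he
  set d := m.natDegree with hd
  have hed : e + d = n := by
    rw [he, hd, ← hg.natDegree_mul hm, ← hf, natDegree_X_pow_sub_C]
  have hg'm : g'.Monic := hg.map φ
  have hm'm : m'.Monic := hm.map φ
  have hg'deg : g'.natDegree = e := natDegree_map φ
  have hm'deg : m'.natDegree = d := natDegree_map φ
  have hgm' : g' * m' = X ^ n - C (φ lam) := by
    rw [hg', hm', ← Polynomial.map_mul, ← hf]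
    rw [Polynomial.map_sub, Polynomial.map_pow, map_X, map_C]
  have hadeg : a.natDegree ≤ n - 1 := natDegree_reflect_le (natDegree_toPoly hn0 x)
  have step1 : ∀ y : Fin n → F,
      ∑ i, x i * (y i) ^ q = (a * map φ (toPoly y)).coeff (n-1) := by
    intro y
    have l1 : ∑ i, x i * (y i) ^ q
        = ∑ k ∈ Finset.range n,
            ((toPoly x).coeff k * φ ((toPoly y).coeff k)) := by
      rw [← Fin.sum_univ_eq_sum_range fun k => ((toPoly x).coeff k * φ ((toPoly y).coeff k))]
      apply Finset.sum_congr rfl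
      intro i _
      rw [coeff_toPoly_fin, coeff_toPoly_fin, hφ]
    rw [l1, coeff_mul, Finset.Nat.sum_antidiagonal_eq_sum_range_succ_mk,
      (by omega : (n - 1).succ = n), ← Finset.sum_range_reflect]
    apply Finset.sum_congr rfl
    intro k hk
    rw [Finset.mem_range] at hk
    rw [ha, coeff_reflect, coeff_map]
    show (toPoly x).coeff (n-1-k) * φ ((toPoly y).coeff (n-1-k))
      = (toPoly x).coeff (revAt (n-1) k) * φ ((toPoly y).coeff (n-1-k))
    rw [revAt_le (by omega : k ≤ n - 1)]
  constructor
  · intro hx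
    have condB : ∀ i, e ≤ i → i < n → (a * g').coeff i = 0 := by
      intro i hei hin
      have hkdeg : (g * X ^ (n-1-i)).degree < (n : WithBot ℕ) := by
        refine lt_of_le_of_lt (degree_le_natDegree) ?_
        rw [natDegree_mul hgne (pow_ne_zero _ X_ne_zero), natDegree_X_pow]
        exact_mod_cast (by omega : e + (n-1-i) < n)
      have hy : (vec (g * X ^ (n-1-i)) : Fin n → F) ∈ code (n := n) g := by
        rw [mem_code, toPoly_vec hkdeg]
        exact dvd_mul_right _ _
      have h0 := hx _ hy
      rw [step1, toPoly_vec hkdeg, Polynomial.map_mul, Polynomial.map_pow, map_X,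
        ← hg', ← mul_assoc, coeff_mul_X_pow', if_pos (by omega : n-1-i ≤ n-1),
        (by omega : n - 1 - (n-1-i) = i)] at h0
      exact h0
    set b := a * g' with hb
    set s := b /ₘ (X^n) with hs
    set r := b %ₘ (X^n) with hr
    have hmonX : (X ^ n : F[X]).Monic := monic_X_pow n
    have hbsr : b = r + X ^ n * s := (modByMonic_add_div b (X ^ n)).symm
    have hrn : r.degree < (n : WithBot ℕ) := by
      have := degree_modByMonic_lt b hmonX
      rwa [degree_X_pow] at this
    have hrdeg : r.degree < (e : WithBot ℕ) := by
      rw [degree_lt_iff_coeff_zero]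
      intro i hei
      by_cases hin : i < n
      · have h1 : (X ^ n * s).coeff i = 0 := by
          rw [mul_comm, coeff_mul_X_pow', if_neg (by omega : ¬ n ≤ i)]
        have h2 : b.coeff i = r.coeff i + (X ^ n * s).coeff i := by
          rw [hbsr, coeff_add]
        rw [condB i hei hin, h1, add_zero] at h2
        exact h2.symm
      · exact (degree_lt_iff_coeff_zero _ _).mp hrn i (by omega)
    have hkey : X ^ n * (a - s * m') = r * m' + C (φ lam) * a := by
      linear_combination m' * hbsr - a * hgm'
    have hz : a - s * m' = 0 := by
      by_contra hne
      have hL : (n : WithBot ℕ) ≤ (X ^ n * (a - s * m')).degree := by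
        rw [degree_mul, degree_X_pow]
        exact le_add_of_nonneg_right (zero_le_degree_iff.mpr hne)
      have hR : (r * m' + C (φ lam) * a).degree < (n : WithBot ℕ) := by
        refine lt_of_le_of_lt (degree_add_le _ _) (max_lt ?_ ?_)
        · rcases eq_or_ne r 0 with hrz | hrne
          · rw [hrz, zero_mul, degree_zero]
            exact lt_of_lt_of_le (WithBot.bot_lt_coe 0) (by exact_mod_cast Nat.zero_le n)
          · refine lt_of_le_of_lt (degree_le_natDegree) ?_
            rw [natDegree_mul hrne hm'm.ne_zero, hm'deg]
            have hre : r.natDegree < e := by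
              rwa [← natDegree_lt_iff_degree_lt hrne] at hrdeg
            exact_mod_cast (by omega : r.natDegree + d < n)
        · refine lt_of_le_of_lt (degree_le_natDegree) ?_
          have h4 : (C (φ lam) * a).natDegree ≤ n - 1 :=
            le_trans (natDegree_C_mul_le _ _) hadeg
          exact_mod_cast (by omega : (C (φ lam) * a).natDegree < n)
      rw [hkey] at hL
      exact absurd (lt_of_le_of_lt hL hR) (lt_irrefl _)
    exact Dvd.intro_left s (by linear_combination -hz)
  · intro hdvd y hy
    rw [step1]
    obtain ⟨t, ht⟩ := mem_code.mp hy
    rcases eq_or_ne t 0 with rfl | htne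
    · rw [ht]
      simp
    rcases eq_or_ne a 0 with haz | hane
    · rw [haz]
      simp
    obtain ⟨s, hsa⟩ := hdvd
    have hsne : s ≠ 0 := by
      rintro rfl
      rw [mul_zero] at hsa
      exact hane hsa
    have hyne : toPoly y ≠ 0 := by
      rw [ht]
      exact mul_ne_zero hgne htne
    have hts : g.natDegree + t.natDegree ≤ n - 1 := by
      have h1 : (toPoly y).natDegree ≤ n - 1 := natDegree_toPoly hn0 y
      rwa [ht, natDegree_mul hgne htne] at h1
    have hss : m.natDegree + s.natDegree ≤ n - 1 := by
      have h1 : a.natDegree = m'.natDegree + s.natDegree := by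
        rw [hsa, natDegree_mul hm'm.ne_zero hsne]
      have h2 : m'.natDegree = m.natDegree := natDegree_map φ
      omega
    have hkey : a * map φ (toPoly y) = (s * map φ t) * X ^ n
        - (s * map φ t) * C (φ lam) := by
      rw [ht, Polynomial.map_mul, hsa, ← hg']
      linear_combination (s * map φ t) * hgm'
    rw [hkey, coeff_sub, coeff_mul_X_pow', if_neg (by omega : ¬ n ≤ n - 1), coeff_mul_C]
    have hst : (s * map φ t).natDegree < n - 1 := by
      refine lt_of_le_of_lt (natDegree_mul_le) ?_
      have : (map φ t).natDegree = t.natDegree := natDegree_map φ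
      omega
    rw [coeff_eq_zero_of_natDegree_lt hst]
    ring

end KeyLemma

section Sigma
variable {q : ℕ} (φ : F →+* F)

lemma sigmaPoly_eq (hφ : ∀ x, φ x = x ^ q) (p : F[X]) :
    sigmaPoly q p = map φ (reciprocal p) := by
  have hmap : map φ (reciprocal p) = (reciprocal p).sum fun i a => C (φ a) * X ^ i := by
    rw [Polynomial.map, eval₂_eq_sum]
    rfl
  rw [sigmaPoly, hmap, Polynomial.sum, Polynomial.sum]
  apply Finset.sum_congr rfl
  intro i _
  rw [hφ]

lemma sigmaPoly_formula (hφ : ∀ x, φ x = x ^ q) (p : F[X]) :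
    sigmaPoly q p = C (((p.coeff 0) ^ q)⁻¹) * reverse (map φ p) := by
  rw [sigmaPoly_eq φ hφ, reciprocal, Polynomial.map_mul, map_C, map_inv₀, hφ]
  congr 1
  rw [reverse, reverse, natDegree_map φ, reflect_map]

lemma coeff_zero_ne_zero_of_dvd (hn0 : 0 < n) {lam : F} (hlam : lam ≠ 0) {p : F[X]}
    (hp : p ∣ (X ^ n - C lam)) : p.coeff 0 ≠ 0 := by
  intro h0
  have hX : (X : F[X]) ∣ X ^ n - C lam := dvd_trans (X_dvd_iff.mpr h0) hp
  rw [X_dvd_iff, coeff_sub, coeff_X_pow, if_neg (by omega : ¬ 0 = n), coeff_C] at hX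
  simp at hX
  exact hlam hX

lemma natDegree_reverse_eq {p : F[X]} (hp0 : p.coeff 0 ≠ 0) :
    (reverse p).natDegree = p.natDegree := by
  refine le_antisymm (reverse_natDegree_le p) ?_
  apply le_natDegree_of_ne_zero
  rwa [coeff_reverse, revAt_le (le_refl _), Nat.sub_self]

lemma natDegree_reverse_map_eq {p : F[X]} (hp0 : p.coeff 0 ≠ 0) :
    (reverse (map φ p)).natDegree = p.natDegree := by
  rw [natDegree_reverse_eq, natDegree_map φ]
  rw [coeff_map]
  exact fun h => hp0 (φ.injective (by rwa [map_zero]))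

lemma coeff_reverse_map_natDegree {p : F[X]} (hp0 : p.coeff 0 ≠ 0) :
    (reverse (map φ p)).coeff p.natDegree = φ (p.coeff 0) := by
  have h1 : (map φ p).natDegree = p.natDegree := natDegree_map φ
  rw [coeff_reverse, h1, revAt_le (le_refl _), Nat.sub_self, coeff_map]

lemma sigmaPoly_monic (hφ : ∀ x, φ x = x ^ q) {p : F[X]} (hp : p.Monic)
    (hp0 : p.coeff 0 ≠ 0) :
    (sigmaPoly q p).Monic ∧ (sigmaPoly q p).natDegree = p.natDegree := by
  have hq0 : (p.coeff 0) ^ q ≠ 0 := pow_ne_zero _ hp0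
  have hinv : ((p.coeff 0) ^ q)⁻¹ ≠ 0 := inv_ne_zero hq0
  have hdeg : (sigmaPoly q p).natDegree = p.natDegree := by
    rw [sigmaPoly_formula φ hφ, natDegree_C_mul hinv, natDegree_reverse_map_eq φ hp0]
  refine ⟨?_, hdeg⟩
  rw [Monic, leadingCoeff, hdeg, sigmaPoly_formula φ hφ, coeff_C_mul,
    coeff_reverse_map_natDegree φ hp0, hφ]
  field_simp

lemma reverse_X_pow_sub_C (hn0 : 0 < n) (mu : F) :
    reverse ((X : F[X]) ^ n - C mu) = 1 - C mu * X ^ n := by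
  rw [reverse, natDegree_X_pow_sub_C, reflect_sub, reflect_C, reflect_monomial,
    revAt_le (le_refl _), Nat.sub_self, pow_zero]

lemma assoc_C_mul (p : F[X]) {u : F} (hu : u ≠ 0) : Associated (C u * p) p := by
  rw [mul_comm]
  exact (associated_mul_unit_right p _ (isUnit_C.mpr (isUnit_iff_ne_zero.mpr hu))).symm

lemma sigmaPoly_X_pow_sub {q : ℕ} (φ : F →+* F) (hφ : ∀ x, φ x = x ^ q) (hn0 : 0 < n)
    {lam : F} (hlam : lam ≠ 0) (hconj : lam = (lam ^ q)⁻¹) :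
    sigmaPoly q ((X : F[X]) ^ n - C lam) = X ^ n - C lam := by
  have hlq : lam ^ q = lam⁻¹ := by
    conv_rhs => rw [hconj]
    rw [inv_inv]
  have hc0 : ((X : F[X]) ^ n - C lam).coeff 0 = -lam := by
    rw [coeff_sub, coeff_X_pow, if_neg (by omega : ¬ 0 = n), coeff_C, if_pos rfl]
    ring
  have hneg : (-lam) ^ q = -(lam ^ q) := by rw [← hφ, map_neg, hφ]
  rw [sigmaPoly_formula φ hφ, Polynomial.map_sub, Polynomial.map_pow, map_X, map_C,
    reverse_X_pow_sub_C hn0, hφ, hlq, hc0, hneg, hlq]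
  have h2 : (-(lam⁻¹))⁻¹ = -lam := by field_simp
  rw [h2]
  have h3 : C (-lam) * C lam⁻¹ = C (-1 : F) := by
    rw [← C_mul, neg_mul, mul_inv_cancel₀ hlam]
  calc C (-lam) * (1 - C lam⁻¹ * X ^ n)
      = C (-lam) - (C (-lam) * C lam⁻¹) * X ^ n := by ring
    _ = X ^ n - C lam := by rw [h3, map_neg, map_neg, C_1]; ring

lemma rev_factor {q : ℕ} (φ : F →+* F) (hφ : ∀ x, φ x = x ^ q) (hn0 : 0 < n)
    {lam : F} (hlam : lam ≠ 0) (hconj : lam = (lam ^ q)⁻¹) {g m : F[X]}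
    (hf : X ^ n - C lam = g * m) :
    reverse (map φ g) * reverse (map φ m) = C (-lam⁻¹) * (X ^ n - C lam) := by
  have hlq : lam ^ q = lam⁻¹ := by
    conv_rhs => rw [hconj]
    rw [inv_inv]
  rw [← reverse_mul_of_domain, ← Polynomial.map_mul, ← hf, Polynomial.map_sub,
    Polynomial.map_pow, map_X, map_C, hφ, hlq, reverse_X_pow_sub_C hn0]
  have h1 : C (-lam⁻¹) * C lam = -1 := by
    rw [← C_mul, neg_mul, inv_mul_cancel₀ hlam, map_neg, C_1]
  rw [mul_sub, h1, map_neg]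
  ring

lemma monic_dvd_eq {u v : F[X]} (hu : u.Monic) (hv : v.Monic) (huv : u ∣ v)
    (hdeg : v.natDegree ≤ u.natDegree) : u = v := by
  obtain ⟨c, hc⟩ := huv
  have hcm : c.Monic := hu.of_mul_monic_left (hc ▸ hv)
  have h1 : v.natDegree = u.natDegree + c.natDegree := by
    rw [hc, hu.natDegree_mul hcm]
  have h2 : c.natDegree = 0 := by omega
  rw [hc, eq_one_of_monic_natDegree_zero hcm h2, mul_one]

lemma assoc_all {q : ℕ} (φ : F →+* F) (hφ : ∀ x, φ x = x ^ q) (hn0 : 0 < n)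
    {lam : F} (hlam : lam ≠ 0)
    (hall : ∀ p : F[X], p.Monic → Irreducible p → p ∣ (X ^ n - C lam) → sigmaPoly q p = p) :
    ∀ gg : F[X], gg ∣ (X ^ n - C lam) → Associated (reverse (map φ gg)) gg := by
  intro gg
  induction gg using UniqueFactorizationMonoid.induction_on_prime with
  | h₁ =>
    intro hdvd
    exact absurd (zero_dvd_iff.mp hdvd) (monic_X_pow_sub_C lam hn0.ne').ne_zero
  | h₂ x hx =>
    intro _
    obtain ⟨r, hr, rfl⟩ := Polynomial.isUnit_iff.mp hx
    rw [map_C, reverse_C]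
    exact (associated_one_iff_isUnit.mpr (isUnit_C.mpr (hr.map φ))).trans
      (associated_one_iff_isUnit.mpr (isUnit_C.mpr hr)).symm
  | h₃ a p ha hp ih =>
    intro hdvd
    have haf : a ∣ X ^ n - C lam := (dvd_mul_left a p).trans hdvd
    have hpf : p ∣ X ^ n - C lam := (dvd_mul_right p a).trans hdvd
    rw [Polynomial.map_mul, reverse_mul_of_domain]
    refine Associated.mul_mul ?_ (ih haf)
    have hpne : p ≠ 0 := hp.ne_zero
    have hlc : p.leadingCoeff ≠ 0 := leadingCoeff_ne_zero.mpr hpne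
    set pm := p * C p.leadingCoeff⁻¹ with hpm
    have hpmm : pm.Monic := monic_mul_leadingCoeff_inv hpne
    have hassoc : Associated p pm :=
      associated_mul_unit_right p _ (isUnit_C.mpr (isUnit_iff_ne_zero.mpr (inv_ne_zero hlc)))
    have hpmirr : Irreducible pm := hassoc.irreducible hp.irreducible
    have hpmf : pm ∣ X ^ n - C lam := hassoc.symm.dvd.trans hpf
    have hpm0 : pm.coeff 0 ≠ 0 := coeff_zero_ne_zero_of_dvd hn0 hlam hpmf
    have hsig : sigmaPoly q pm = pm := hall pm hpmm hpmirr hpmf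
    have h5 : C ((pm.coeff 0 ^ q)⁻¹) * reverse (map φ pm) = pm :=
      (sigmaPoly_formula φ hφ pm).symm.trans hsig
    have hassoc2 : Associated (reverse (map φ pm)) pm := by
      conv_rhs => rw [← h5]
      exact (assoc_C_mul _ (inv_ne_zero (pow_ne_zero q hpm0))).symm
    have hrevrel : reverse (map φ pm) = reverse (map φ p) * C (φ p.leadingCoeff⁻¹) := by
      rw [hpm, Polynomial.map_mul, map_C, reverse_mul_of_domain, reverse_C]
    have hphi : φ p.leadingCoeff⁻¹ ≠ 0 := by
      intro hz
      have := φ.injective (hz.trans (map_zero φ).symm)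
      exact inv_ne_zero hlc this
    have hassoc3 : Associated (reverse (map φ p)) (reverse (map φ pm)) := by
      rw [hrevrel]
      exact associated_mul_unit_right _ _ (isUnit_C.mpr (isUnit_iff_ne_zero.mpr hphi))
    exact (hassoc3.trans hassoc2).trans hassoc.symm

end Sigma
end ConstaAux

theorem dual_containing_exists_iff_conjugate_reciprocal_pair
    {q n : ℕ} (hq : IsPrimePow q) (hn : 0 < n) (hgcd : Nat.gcd n q = 1)
    {F : Type} [Field F] [Fintype F] (hF : Fintype.card F = q ^ 2)
    (lam : F) (hlam : lam ≠ 0) (hconj : lam = (lam ^ q)⁻¹) :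
    (∃ C : Submodule F (Fin n → F),
      IsConstacyclic lam C ∧ C ≠ ⊥ ∧ C ≠ ⊤ ∧ hermDual q C ⊆ (C : Set (Fin n → F))) ↔
    (∃ h : F[X], h.Monic ∧ Irreducible h ∧ h ∣ (X ^ n - Polynomial.C lam) ∧
      sigmaPoly q h ≠ h) := by
  classical
  open ConstaAux in
  -- Set up the Frobenius `x ↦ x ^ q` as a ring homomorphism.
  obtain ⟨p, k, hpp', hk, hqpk⟩ := hq
  have hpp : p.Prime := Nat.prime_iff.mpr hpp'
  haveI : Fact p.Prime := ⟨hpp⟩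
  haveI hchar0 : CharP F (ringChar F) := ringChar.charP F
  have hF' : Fintype.card F = p ^ (2 * k) := by
    rw [hF, ← hqpk, ← pow_mul, Nat.mul_comm]
  have hrdvd : ringChar F ∣ p ^ (2 * k) := by
    have h1 : ((p ^ (2 * k) : ℕ) : F) = 0 := by
      rw [← hF']
      exact Nat.cast_card_eq_zero F
    exact (CharP.cast_eq_zero_iff F (ringChar F) _).mp h1
  have hrp : ringChar F = p := by
    have h2 : (ringChar F).Prime := CharP.char_is_prime F (ringChar F)
    exact (Nat.prime_dvd_prime_iff_eq h2 hpp).mp (h2.dvd_of_dvd_pow hrdvd)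
  haveI hcharp : CharP F p := hrp ▸ hchar0
  set φ : F →+* F := iterateFrobenius F p k with hφdef
  have hφ : ∀ x : F, φ x = x ^ q := fun x => by
    rw [hφdef, iterateFrobenius_def, hqpk]
  have hnF : (n : F) ≠ 0 := by
    intro h0
    have hpn : p ∣ n := (CharP.cast_eq_zero_iff F p n).mp h0
    have hpq : p ∣ q := hqpk ▸ dvd_pow_self p hk.ne'
    have hone := Nat.dvd_gcd hpn hpq
    rw [hgcd] at hone
    exact hpp.one_lt.ne' (Nat.dvd_one.mp hone)
  have hfm : (X ^ n - Polynomial.C lam).Monic := monic_X_pow_sub_C lam hn.ne'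
  have hfsq : Squarefree (X ^ n - Polynomial.C lam) :=
    (separable_X_pow_sub_C lam hnF hlam).squarefree
  have hfdegn : (X ^ n - Polynomial.C lam).natDegree = n := natDegree_X_pow_sub_C
  constructor
  · rintro ⟨M, hMcc, hMbot, hMtop, hMdual⟩
    by_contra hno
    push_neg at hno
    have hall : ∀ p : F[X], p.Monic → Irreducible p → p ∣ (X ^ n - Polynomial.C lam) →
        sigmaPoly q p = p := fun p h1 h2 h3 => hno p h1 h2 h3
    obtain ⟨g, hgm, hgf, hMeq⟩ := ConstaAux.exists_generator hn lam M hMcc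
    subst hMeq
    obtain ⟨m, hm⟩ := hgf
    have hmm : m.Monic := hgm.of_mul_monic_left (hm ▸ hfm)
    have hed : g.natDegree + m.natDegree = n := by
      rw [← hgm.natDegree_mul hmm, ← hm, natDegree_X_pow_sub_C]
    have hgnu : ¬ IsUnit g := by
      intro hu
      apply hMtop
      rw [Submodule.eq_top_iff']
      intro c
      exact mem_code.mpr (hu.dvd)
    have hg1 : g.natDegree ≠ 0 := fun h0 =>
      hgnu (by rw [eq_one_of_monic_natDegree_zero hgm h0]; exact isUnit_one)
    have hgdeg : g.natDegree ≤ n - 1 := by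
      obtain ⟨c, hcM, hcne⟩ := (Submodule.ne_bot_iff _).mp hMbot
      have hcp : toPoly c ≠ 0 := fun hz =>
        hcne (by rw [← vec_toPoly c, hz, ← toPoly_zero (n := n) (F := F), vec_toPoly])
      exact le_trans (natDegree_le_of_dvd (mem_code.mp hcM) hcp) (natDegree_toPoly hn c)
    have hmdeg' : (map φ m).natDegree = m.natDegree := natDegree_map φ
    have hmdeg : m.natDegree ≤ n - 1 := by omega
    have hrefl_deg : (reflect (n - 1) (map φ m)).degree < (n : WithBot ℕ) := by
      refine lt_of_le_of_lt degree_le_natDegree ?_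
      have h6 := natDegree_reflect_le (N := n - 1) (p := map φ m) (by omega)
      exact_mod_cast (by omega : (reflect (n - 1) (map φ m)).natDegree < n)
    set x : Fin n → F := vec (reflect (n - 1) (map φ m)) with hx
    have hxpoly : toPoly x = reflect (n - 1) (map φ m) := toPoly_vec hrefl_deg
    have hxdual : x ∈ hermDual q (code g) := by
      rw [mem_hermDual_iff φ hφ hn hgm hmm hm x, hxpoly, ConstaAux.reflect_reflect]
    have hxC : x ∈ code g := hMdual hxdual
    have hdvd1 : g ∣ X ^ (n - 1 - m.natDegree) * reverse (map φ m) := by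
      have hsplit : reflect (n - 1) (map φ m)
          = X ^ (n - 1 - (map φ m).natDegree) * reverse (map φ m) := by
        have h1 := reflect_mul (1 : F[X]) (map φ m)
          (F := n - 1 - (map φ m).natDegree) (G := (map φ m).natDegree)
          (by simp) (le_refl _)
        rw [one_mul, reflect_one] at h1
        rw [(by omega : n - 1 - (map φ m).natDegree + (map φ m).natDegree = n - 1)] at h1
        rw [h1]
        rfl
      have := mem_code.mp hxC
      rwa [hxpoly, hsplit, hmdeg'] at this
    have hg0 : g.coeff 0 ≠ 0 := coeff_zero_ne_zero_of_dvd hn hlam ⟨m, hm⟩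
    have hXg : IsCoprime (X ^ (n - 1 - m.natDegree) : F[X]) g :=
      IsCoprime.pow_left ((Polynomial.irreducible_X.coprime_iff_not_dvd).mpr
        (fun hdX => hg0 (X_dvd_iff.mp hdX)))
    have hdvd2 : g ∣ reverse (map φ m) := (hXg.symm).dvd_of_dvd_mul_left hdvd1
    have hassocg : Associated (reverse (map φ g)) g :=
      assoc_all φ hφ hn hlam hall g ⟨m, hm⟩
    have hdvd3 : g * g ∣ reverse (map φ g) * reverse (map φ m) :=
      mul_dvd_mul (hassocg.symm.dvd) hdvd2
    rw [rev_factor φ hφ hn hlam hconj hm] at hdvd3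
    have hdvd4 : g * g ∣ X ^ n - Polynomial.C lam :=
      (assoc_C_mul (X ^ n - Polynomial.C lam) (neg_ne_zero.mpr (inv_ne_zero hlam))).dvd_iff_dvd_right.mp hdvd3
    exact hgnu (hfsq g hdvd4)
  · rintro ⟨h, hhm, hhirr, hhf, hhsig⟩
    obtain ⟨m, hm⟩ := hhf
    have hmm : m.Monic := hhm.of_mul_monic_left (hm ▸ hfm)
    have hh0 : h.coeff 0 ≠ 0 := coeff_zero_ne_zero_of_dvd hn hlam ⟨m, hm⟩
    have hed : h.natDegree + m.natDegree = n := by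
      rw [← hhm.natDegree_mul hmm, ← hm, natDegree_X_pow_sub_C]
    have hdeg : h.natDegree < n := by
      by_contra hge
      have hm0 : m.natDegree = 0 := by omega
      have hm1 : m = 1 := eq_one_of_monic_natDegree_zero hmm hm0
      rw [hm1, mul_one] at hm
      exact hhsig (by rw [← hm]; exact sigmaPoly_X_pow_sub φ hφ hn hlam hconj)
    refine ⟨code h, code_constacyclic hn ⟨m, hm⟩, ?_, ?_, ?_⟩
    · refine code_ne_bot hhirr.ne_zero ?_
      exact lt_of_le_of_lt degree_le_natDegree (by exact_mod_cast hdeg)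
    · exact code_ne_top hn hhirr.not_isUnit
    · intro x hx
      rw [mem_hermDual_iff φ hφ hn hhm hmm hm x] at hx
      show x ∈ code h
      rw [mem_code]
      obtain ⟨t, hht⟩ := hx
      have hxp : toPoly x = reflect (n - 1) (map φ m * t) := by
        rw [← hht, ConstaAux.reflect_reflect]
      rcases eq_or_ne t 0 with rfl | htne
      · rw [mul_zero, reflect_zero] at hxp
        rw [hxp]
        exact dvd_zero h
      have hmφne : map φ m ≠ 0 := by
        intro hz
        exact hmm.ne_zero (Polynomial.map_eq_zero_iff φ.injective |>.mp hz)
      have hd' : (map φ m).natDegree = m.natDegree := natDegree_map φ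
      have htdeg : (map φ m).natDegree + t.natDegree ≤ n - 1 := by
        have h1 : (map φ m * t).natDegree ≤ n - 1 := by
          rw [← hht]
          exact natDegree_reflect_le (natDegree_toPoly hn x)
        rwa [natDegree_mul hmφne htne] at h1
      have hsplit : reflect (n - 1) (map φ m * t)
          = reverse (map φ m) * reflect (n - 1 - (map φ m).natDegree) t := by
        have h1 := reflect_mul (map φ m) t (F := (map φ m).natDegree)
          (G := n - 1 - (map φ m).natDegree) (le_refl _) (by omega)
        rw [(by omega : (map φ m).natDegree + (n - 1 - (map φ m).natDegree) = n - 1)] at h1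
        rw [h1]
        rfl
      have hprime : Prime h := irreducible_iff_prime.mp hhirr
      have hdvd2 : h ∣ reverse (map φ h) * reverse (map φ m) := by
        rw [rev_factor φ hφ hn hlam hconj hm]
        exact Dvd.dvd.mul_left ⟨m, hm⟩ _
      rcases hprime.2.2 _ _ hdvd2 with hcase | hcase
      · exfalso
        have hsig := sigmaPoly_monic φ hφ hhm hh0
        have hdvd5 : h ∣ sigmaPoly q h := by
          rw [sigmaPoly_formula φ hφ]
          exact hcase.mul_left _
        exact hhsig ((monic_dvd_eq hhm hsig.1 hdvd5 (le_of_eq hsig.2)).symm)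
      · rw [hxp, hsplit]
        exact hcase.mul_right _
end

section
/- Let q be an odd prime power, let r be a positive divisor of q+1, let n = (q²−1)/r, and let λ ∈ F_{q²}* have order r. Then nontrivial Hermitian dual-containing λ-constacyclic codes of length n over F_{q²} exist. -/
lemma aux_exists {F : Type} [Field F] [Fintype F] (q m : ℕ) (hq1 : 1 ≤ q) (hqodd : Odd q)
    (hF : Fintype.card F = q ^ 2) (hm : 1 ≤ m)
    (lam a : F) (ha0 : a ≠ 0)
    (han : a ^ (m + 1) = lam)
    (hlamq : lam ^ (q + 1) = 1)
    (haq : a ^ (q + 1) ≠ 1) :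
    ∃ C : Submodule F (Fin (m + 1) → F),
      IsConstacyclic lam C ∧ C ≠ ⊥ ∧ C ≠ ⊤ ∧
        hermDual q C ⊆ (C : Set (Fin (m + 1) → F)) := by
  classical
  have hq0 : q ≠ 0 := by omega
  set w : Fin (m + 1) → F := fun i => a ^ ((m - (i : ℕ)) * q) with hw
  set v : Fin (m + 1) → F := fun i => a ^ (m - (i : ℕ)) with hv
  have hwne : ∀ i, w i ≠ 0 := fun i => pow_ne_zero _ ha0
  have hwlast : w (Fin.last m) = 1 := by simp [hw]
  have hvlast : v (Fin.last m) = 1 := by simp [hv]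
  set L : (Fin (m + 1) → F) →ₗ[F] F :=
    { toFun := fun x => ∑ i, x i * w i
      map_add' := fun x y => by simp [add_mul, Finset.sum_add_distrib]
      map_smul' := fun c x => by simp [Finset.mul_sum, mul_assoc] } with hL
  have hLapp : ∀ x : Fin (m + 1) → F, L x = ∑ i, x i * w i := fun _ => rfl
  have hLsingle : ∀ (i : Fin (m + 1)) (c : F), L (Pi.single i c) = c * w i := by
    intro i c
    rw [hLapp]
    simp [Pi.single_apply, ite_mul, Finset.sum_ite_eq']
  -- key geometric sum
  have keysum : ∑ i : Fin (m + 1), v i * w i = 0 := by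
    have hb : ∀ i : Fin (m + 1), v i * w i = (a ^ (q + 1)) ^ (m - (i : ℕ)) := by
      intro i
      show a ^ (m - (i : ℕ)) * a ^ ((m - (i : ℕ)) * q) = _
      rw [← pow_add, ← pow_mul]
      congr 1
      ring
    rw [Finset.sum_congr rfl fun i _ => hb i]
    rw [Fin.sum_univ_eq_sum_range (fun i => (a ^ (q + 1)) ^ (m - i)) (m + 1)]
    have hrefl := Finset.sum_range_reflect (fun j => (a ^ (q + 1)) ^ j) (m + 1)
    simp only [Nat.add_sub_cancel] at hrefl
    rw [hrefl, geom_sum_eq haq]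
    have hone : (a ^ (q + 1)) ^ (m + 1) = 1 := by
      rw [← pow_mul, mul_comm, pow_mul, han, hlamq]
    rw [hone]
    simp
  refine ⟨LinearMap.ker L, ?_, ?_, ?_, ?_⟩
  · -- constacyclic
    intro c hc
    have hc' : ∑ i, c i * w i = 0 := hc
    have main : ∀ d : Fin (m + 1) → F,
        d 0 = lam * c (Fin.last m) →
        (∀ i : Fin m, d i.succ = c i.castSucc) →
        (∑ i, d i * w i) = 0 := by
      intro d hd0 hds
      have hz : a ^ q * ∑ i, d i * w i = 0 := by
        rw [Finset.mul_sum, Fin.sum_univ_succ, hd0]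
        have hterm : ∀ i : Fin m,
            a ^ q * (d i.succ * w i.succ) = c i.castSucc * w i.castSucc := by
          intro i
          have hi := i.isLt
          have hwstep : a ^ q * w i.succ = w i.castSucc := by
            show a ^ q * a ^ ((m - ((i : ℕ) + 1)) * q) = a ^ ((m - (i : ℕ)) * q)
            rw [← pow_add]
            congr 1
            have h1 : m - (i : ℕ) = (m - ((i : ℕ) + 1)) + 1 := by omega
            rw [h1, add_mul, one_mul, add_comm]
          rw [hds i]
          calc a ^ q * (c i.castSucc * w i.succ)
              = c i.castSucc * (a ^ q * w i.succ) := by ring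
            _ = c i.castSucc * w i.castSucc := by rw [hwstep]
        rw [Finset.sum_congr rfl fun i _ => hterm i]
        have hcast : ∑ i : Fin m, c i.castSucc * w i.castSucc
            = - (c (Fin.last m) * w (Fin.last m)) := by
          have h2 := Fin.sum_univ_castSucc (f := fun i => c i * w i)
          rw [hc'] at h2
          linear_combination -h2
        rw [hcast, hwlast]
        have hw0 : w 0 = a ^ (m * q) := by simp [hw]
        rw [hw0]
        have hlamq1 : lam * a ^ ((m + 1) * q) = 1 := by
          calc lam * a ^ ((m + 1) * q) = lam * (a ^ (m + 1)) ^ q := by rw [pow_mul]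
            _ = lam * lam ^ q := by rw [han]
            _ = lam ^ (q + 1) := by ring
            _ = 1 := hlamq
        have hexp : a ^ q * a ^ (m * q) = a ^ ((m + 1) * q) := by
          rw [← pow_add]
          congr 1
          ring
        calc a ^ q * (lam * c (Fin.last m) * a ^ (m * q)) + -(c (Fin.last m) * 1)
            = c (Fin.last m) * (lam * (a ^ q * a ^ (m * q))) - c (Fin.last m) := by ring
          _ = c (Fin.last m) * (lam * a ^ ((m + 1) * q)) - c (Fin.last m) := by rw [hexp]
          _ = 0 := by rw [hlamq1]; ring
      have haq0 : a ^ q ≠ 0 := pow_ne_zero _ ha0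
      exact (mul_eq_zero.mp hz).resolve_left haq0
    refine LinearMap.mem_ker.mpr ?_
    rw [hLapp]
    refine main _ ?_ ?_
    · simp
      exact Or.inl rfl
    · intro i
      have hne : ¬ ((i.succ : ℕ) = 0) := by simp [Fin.val_succ]
      simp only [dif_neg hne]
      rfl
  · -- ≠ ⊥
    intro hbot
    have hmlt : (1 : ℕ) < m + 1 := by omega
    set i1 : Fin (m + 1) := ⟨1, hmlt⟩ with hi1
    have hne : (0 : Fin (m + 1)) ≠ i1 := by
      simp [hi1, Fin.ext_iff]
    have hyC : (Pi.single (0 : Fin (m + 1)) (w i1) - Pi.single i1 (w 0)) ∈ LinearMap.ker L := by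
      refine LinearMap.mem_ker.mpr ?_
      rw [map_sub, hLsingle, hLsingle]
      ring
    rw [hbot, Submodule.mem_bot] at hyC
    have h0 : w i1 = 0 := by
      have := congrFun hyC 0
      simpa [Pi.single_eq_same, Pi.single_eq_of_ne hne] using this
    exact hwne i1 h0
  · -- ≠ ⊤
    intro htop
    have hmem : Pi.single (Fin.last m) (1 : F) ∈ LinearMap.ker L := by
      rw [htop]; trivial
    have h1 := LinearMap.mem_ker.mp hmem
    rw [hLsingle, hwlast] at h1
    norm_num at h1
  · -- dual containing
    intro x hx
    have hwq : ∀ t : Fin (m + 1), (w t) ^ q = v t := by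
      intro t
      show (a ^ ((m - (t : ℕ)) * q)) ^ q = a ^ (m - (t : ℕ))
      rw [← pow_mul]
      have : (m - (t : ℕ)) * q * q = (m - (t : ℕ)) * q ^ 2 := by ring
      rw [this, pow_mul, ← hF, FiniteField.pow_card]
    have hxy : ∀ i j : Fin (m + 1), i ≠ j → x i * v j = x j * v i := by
      intro i j hij
      have hyC : (Pi.single i (w j) - Pi.single j (w i)) ∈ LinearMap.ker L := by
        refine LinearMap.mem_ker.mpr ?_
        rw [map_sub, hLsingle, hLsingle]
        ring
      have h := hx _ hyC
      have hterm : ∀ k, x k * (((Pi.single i (w j) - Pi.single j (w i)) : Fin (m + 1) → F) k) ^ q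
          = (if k = i then x i * (w j) ^ q else 0) + (if k = j then -(x j * (w i) ^ q) else 0) := by
        intro k
        by_cases hki : k = i
        · subst hki
          have : ¬ (k = j) := hij
          simp [Pi.single_eq_same, Pi.single_eq_of_ne hij, this]
        · by_cases hkj : k = j
          · subst hkj
            rw [Pi.sub_apply, Pi.single_eq_of_ne hki, Pi.single_eq_same, if_neg hki,
              if_pos rfl, zero_sub, Odd.neg_pow hqodd]
            ring
          · simp [Pi.single_eq_of_ne hki, Pi.single_eq_of_ne hkj, hki, hkj,
              zero_pow hq0]
      rw [Finset.sum_congr rfl fun k _ => hterm k, Finset.sum_add_distrib] at h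
      simp only [Finset.sum_ite_eq', Finset.mem_univ, if_true] at h
      rw [hwq, hwq] at h
      linear_combination h
    have hrel : ∀ i, x i = x (Fin.last m) * v i := by
      intro i
      by_cases hi : i = Fin.last m
      · subst hi; rw [hvlast]; ring
      · have h := hxy i (Fin.last m) hi
        rw [hvlast, mul_one] at h
        exact h
    show x ∈ LinearMap.ker L
    refine LinearMap.mem_ker.mpr ?_
    rw [hLapp]
    have hterm : ∀ i : Fin (m + 1), x i * w i = x (Fin.last m) * (v i * w i) := by
      intro i
      rw [hrel i]; ring
    rw [Finset.sum_congr rfl fun i _ => hterm i, ← Finset.mul_sum, keysum, mul_zero]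

lemma exists_good_root {q r : ℕ} (hq : IsPrimePow q) (hqodd : Odd q) (hr : 0 < r) (hrdvd : r ∣ q + 1)
    {F : Type} [Field F] [Fintype F] (hF : Fintype.card F = q ^ 2)
    (lam : F) (hlam : lam ≠ 0) (hord : orderOf lam = r) :
    ∃ m a, (1 ≤ m ∧ (q ^ 2 - 1) / r = m + 1) ∧ a ≠ 0 ∧ a ^ (m + 1) = lam ∧
      lam ^ (q + 1) = (1 : F) ∧ a ^ (q + 1) ≠ (1 : F) := by
  classical
  have hq2 : 2 ≤ q := hq.two_le
  have hq3 : 3 ≤ q := by obtain ⟨t, ht⟩ := hqodd; omega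
  have hfactor : (q + 1) * (q - 1) = q ^ 2 - 1 := by
    cases q with
    | zero => omega
    | succ t =>
      have h : (t + 1) ^ 2 = t * t + 2 * t + 1 := by ring
      have h2 : (t + 1 + 1) * (t + 1 - 1) = t * t + 2 * t := by
        simp [Nat.add_sub_cancel]
        ring
      omega
  have hrN : r ∣ q ^ 2 - 1 := hfactor ▸ hrdvd.mul_right (q - 1)
  set n := (q ^ 2 - 1) / r with hn
  have hnr : n * r = q ^ 2 - 1 := Nat.div_mul_cancel hrN
  have hrle : r ≤ q + 1 := Nat.le_of_dvd (by omega) hrdvd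
  have hqq : 3 * q ≤ q * q := Nat.mul_le_mul_right q hq3
  have hsq : q ^ 2 = q * q := sq q
  have hn2 : 2 ≤ n := by
    by_contra hcon
    have hle : n ≤ 1 := by omega
    have h1 : n * r ≤ 1 * (q + 1) := Nat.mul_le_mul hle hrle
    omega
  -- units
  obtain ⟨g, hg⟩ := IsCyclic.exists_generator (α := Fˣ)
  have hcardU : Fintype.card Fˣ = q ^ 2 - 1 := by rw [Fintype.card_units, hF]
  have hgord : orderOf g = q ^ 2 - 1 := by
    rw [orderOf_eq_card_of_forall_mem_zpowers hg, Nat.card_eq_fintype_card, hcardU]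
  set lu : Fˣ := Units.mk0 lam hlam with hlu
  have hluval : (lu : F) = lam := rfl
  have hluord : orderOf lu = r := by
    rw [← hord, ← orderOf_units, hluval]
  obtain ⟨k, hk'⟩ : lu ∈ Submonoid.powers g := mem_powers_iff_mem_zpowers.mpr (hg lu)
  have hk : g ^ k = lu := hk'
  have hlur : lu ^ r = 1 := by rw [← hluord]; exact pow_orderOf_eq_one lu
  have hNdvd : q ^ 2 - 1 ∣ k * r := by
    rw [← hgord]
    apply orderOf_dvd_of_pow_eq_one
    rw [pow_mul, hk, hlur]
  have hndvd : n ∣ k := by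
    have h1 : n * r ∣ k * r := by rw [hnr]; exact hNdvd
    exact (Nat.mul_dvd_mul_iff_right hr).mp h1
  obtain ⟨m0, hm0⟩ := hndvd
  have hcand : ∀ t, (g ^ (m0 + t * r)) ^ n = lu := by
    intro t
    rw [← pow_mul]
    have he : (m0 + t * r) * n = k + t * (n * r) := by rw [hm0]; ring
    rw [he, hnr, pow_add, hk, mul_comm t, pow_mul, ← hgord, pow_orderOf_eq_one, one_pow, mul_one]
  have hA : ∃ A : Fˣ, A ^ n = lu ∧ A ^ (q + 1) ≠ 1 := by
    by_cases h0 : (g ^ m0) ^ (q + 1) = 1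
    · by_cases h1 : (g ^ (m0 + r)) ^ (q + 1) = 1
      · exfalso
        rw [← pow_mul] at h0 h1
        have hgr : g ^ (r * (q + 1)) = 1 := by
          have e : g ^ ((m0 + r) * (q + 1)) = g ^ (m0 * (q + 1)) * g ^ (r * (q + 1)) := by
            rw [← pow_add]; congr 1; ring
          rw [e, h0, one_mul] at h1
          exact h1
        have hdvd2 : q ^ 2 - 1 ∣ r * (q + 1) := by
          rw [← hgord]; exact orderOf_dvd_of_pow_eq_one hgr
        have hnq : n ∣ q + 1 := by
          have h' : n * r ∣ (q + 1) * r := by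
            rw [hnr, mul_comm (q + 1) r]; exact hdvd2
          exact (Nat.mul_dvd_mul_iff_right hr).mp h'
        obtain ⟨s, hs⟩ := hnq
        have hls : lu ^ s = 1 := by
          calc lu ^ s = g ^ (k * s) := by rw [← hk, ← pow_mul]
            _ = g ^ (m0 * (q + 1)) := by rw [hm0, hs]; congr 1; ring
            _ = 1 := h0
        have hrs : r ∣ s := by
          have := orderOf_dvd_of_pow_eq_one hls
          rwa [hluord] at this
        have hs0 : 0 < s := by
          rcases Nat.eq_zero_or_pos s with h | h
          · rw [h, mul_zero] at hs; omega
          · exact h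
        have hle : n * r ≤ n * s := Nat.mul_le_mul_left n (Nat.le_of_dvd hs0 hrs)
        rw [hnr, ← hs] at hle
        omega
      · exact ⟨g ^ (m0 + r), by simpa using hcand 1, h1⟩
    · exact ⟨g ^ m0, by simpa using hcand 0, h0⟩
  obtain ⟨A, hAn, hAq⟩ := hA
  refine ⟨n - 1, (A : F), ⟨by omega, by omega⟩, A.ne_zero, ?_, ?_, ?_⟩
  · have : ((A : F)) ^ (n - 1 + 1) = ((A ^ (n - 1 + 1) : Fˣ) : F) := by
      rw [Units.val_pow_eq_pow_val]
    rw [this]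
    have hn1 : n - 1 + 1 = n := by omega
    rw [hn1, hAn, hluval]
  · obtain ⟨t, ht⟩ := hrdvd
    have hlr : lam ^ r = 1 := by rw [← hord]; exact pow_orderOf_eq_one lam
    rw [ht, pow_mul, hlr, one_pow]
  · intro h
    apply hAq
    apply Units.ext
    rw [Units.val_pow_eq_pow_val]
    simpa using h

theorem dual_containing_exists_length_q_sq_sub_one_div_r
    {q r : ℕ} (hq : IsPrimePow q) (hqodd : Odd q) (hr : 0 < r) (hrdvd : r ∣ q + 1)
    {F : Type} [Field F] [Fintype F] (hF : Fintype.card F = q ^ 2)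
    (lam : F) (hlam : lam ≠ 0) (hord : orderOf lam = r) :
    ∃ C : Submodule F (Fin ((q ^ 2 - 1) / r) → F),
      IsConstacyclic lam C ∧ C ≠ ⊥ ∧ C ≠ ⊤ ∧
        hermDual q C ⊆ (C : Set (Fin ((q ^ 2 - 1) / r) → F)) := by
  obtain ⟨m, a, ⟨hm1, hmn⟩, ha0, han, hlamq, haq⟩ :=
    exists_good_root hq hqodd hr hrdvd hF lam hlam hord
  rw [hmn]
  exact aux_exists q m (by have := hq.two_le; omega) hqodd hF hm1 lam a ha0 han hlamq haq
end

section
/- Let q be an odd prime power with 3 dividing q+1, and let Z₁ = {1 + 3((q−2)/3 + j) : 1 ≤ j ≤ 2(q−2)/3}. Then Z₁ ∩ (−qZ₁) = ∅ modulo q²−1; that is, for all integers j, k with 1 ≤ j, k ≤ 2(q−2)/3, −q·(1 + 3((q−2)/3 + j)) ≢ 1 + 3((q−2)/3 + k) (mod q²−1). -/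
theorem defining_set_Z1_dual_containing
    {q : ℕ} (hq : IsPrimePow q) (hqodd : Odd q) (h3 : 3 ∣ q + 1) :
    ∀ j k : ℤ, 1 ≤ j → j ≤ 2 * ((q : ℤ) - 2) / 3 → 1 ≤ k → k ≤ 2 * ((q : ℤ) - 2) / 3 →
      ¬ (-(q : ℤ) * (1 + 3 * (((q : ℤ) - 2) / 3 + j)) ≡
          1 + 3 * (((q : ℤ) - 2) / 3 + k) [ZMOD (q : ℤ) ^ 2 - 1]) := by
  intro j k hj1 hj2 hk1 hk2 hmod
  obtain ⟨t, ht⟩ := h3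
  have hq2 : (2 : ℕ) ≤ q := hq.two_le
  have hQ2 : (2 : ℤ) ≤ (q : ℤ) := by exact_mod_cast hq2
  have hT : (q : ℤ) + 1 = 3 * (t : ℤ) := by exact_mod_cast ht
  set Q : ℤ := (q : ℤ) with hQ
  set T : ℤ := (t : ℤ) with hTdef
  have hT1 : 1 ≤ T := by omega
  -- exact divisions
  have hm : 3 * ((Q - 2) / 3) = Q - 2 := by
    have : (3 : ℤ) ∣ Q - 2 := ⟨T - 1, by linarith⟩
    exact Int.mul_ediv_cancel' this
  have hm2 : 2 * (Q - 2) / 3 = 2 * ((Q - 2) / 3) := by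
    conv_lhs => rw [← hm]
    rw [show 2 * (3 * ((Q - 2) / 3)) = 2 * ((Q - 2) / 3) * 3 by ring]
    exact Int.mul_ediv_cancel _ (by norm_num)
  set m : ℤ := (Q - 2) / 3 with hmdef
  rw [hm2] at hj2 hk2
  have hmT : m = T - 1 := by omega
  clear hmdef hm hm2
  -- from the congruence
  have hdvd : Q ^ 2 - 1 ∣ 3 * Q * j + 3 * k := by
    have hd := hmod.dvd
    have e : 1 + 3 * (m + k) - (-Q * (1 + 3 * (m + j))) = (Q ^ 2 - 1) + (3 * Q * j + 3 * k) := by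
      rw [hmT]; linear_combination (-(Q+1)) * hT
    rw [e] at hd
    exact (dvd_add_right dvd_rfl).mp hd
  have hpos : 0 < Q ^ 2 - 1 := by nlinarith
  obtain ⟨c, hc⟩ := hdvd
  have hlow : 0 < 3 * Q * j + 3 * k := by nlinarith
  have hhigh : 3 * Q * j + 3 * k < 2 * (Q ^ 2 - 1) := by nlinarith [hj2, hk2, hmT, hT1]
  have hcpos : 0 < c := by
    by_contra hcn
    push_neg at hcn
    nlinarith [mul_nonpos_of_nonneg_of_nonpos (le_of_lt hpos) hcn]
  have hclt : c < 2 := by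
    by_contra hcn
    push_neg at hcn
    nlinarith [mul_le_mul_of_nonneg_left hcn (le_of_lt hpos)]
  have hc1 : c = 1 := by omega
  rw [hc1, mul_one] at hc
  -- so k = Q*(T - j) - T
  have h3k : 3 * k = 3 * (Q * (T - j) - T) := by linear_combination hc + (Q - 1) * hT
  have hk : k = Q * (T - j) - T := mul_left_cancel₀ (by norm_num : (3 : ℤ) ≠ 0) h3k
  have hu : 1 ≤ T - j := by
    by_contra hun
    push_neg at hun
    have hTj : T - j ≤ 0 := by omega
    nlinarith [mul_nonpos_of_nonneg_of_nonpos (by linarith : (0 : ℤ) ≤ Q) hTj]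
  have := mul_le_mul_of_nonneg_left hu (by linarith : (0 : ℤ) ≤ Q)
  rw [mul_one] at this
  linarith [hk2, hmT, hk, this, hT]
end

section
/- Let q be an odd prime power with 3 dividing q+1, let n = (q²−1)/3, and let λ ∈ F_{q²}* have order 3. Then for every integer δ with 1 ≤ δ ≤ 2(q−2)/3, there exists a Hermitian dual-containing λ-constacyclic code C of length n over F_{q²} with dim_{F_{q²}} C = n − δ and minimum Hamming distance δ + 1 (in particular, C is an MDS code with parameters [n, n−δ, δ+1]). -/
open Finset in
/-- Vandermonde-type nondegeneracy: a scaled Vandermonde system has only the zero solution. -/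
lemma vand_zero {F : Type} [Field F] {t : ℕ} (v D : Fin t → F)
    (hv : Function.Injective v) (hD : ∀ i, D i ≠ 0) (x : Fin t → F)
    (h : ∀ j : Fin t, ∑ i, D i * v i ^ (j : ℕ) * x i = 0) : x = 0 := by
  classical
  set W : Matrix (Fin t) (Fin t) F := Matrix.of fun j i => D i * v i ^ (j : ℕ) with hW
  have hdet : W.det ≠ 0 := by
    have hWe : W = (Matrix.vandermonde v).transpose * Matrix.diagonal D := by
      ext j i
      simp [hW, Matrix.mul_diagonal, Matrix.vandermonde, Matrix.transpose_apply, mul_comm]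
    rw [hWe, Matrix.det_mul, Matrix.det_transpose, Matrix.det_diagonal]
    exact mul_ne_zero (Matrix.det_vandermonde_ne_zero_iff.mpr hv)
      (Finset.prod_ne_zero_iff.mpr fun i _ => hD i)
  apply Matrix.eq_zero_of_mulVec_eq_zero hdet
  funext j
  simpa [Matrix.mulVec, dotProduct, hW] using h j

/-- Shift identity for constacyclic sums. -/
lemma aux_shift {F : Type} [CommRing F] {n : ℕ} (b lam : F) (hb : b ^ n = lam)
    (c : Fin n → F) :
    (∑ i : Fin n, b ^ (i : ℕ) *
      (if _ : (i : ℕ) = 0 then lam * c ⟨n - 1, Nat.sub_lt i.pos one_pos⟩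
       else c ⟨(i : ℕ) - 1, by have := i.isLt; omega⟩)) = b * ∑ i : Fin n, b ^ (i : ℕ) * c i := by
  cases n with
  | zero => simp
  | succ m =>
    rw [Fin.sum_univ_succ]
    conv_rhs => rw [Fin.sum_univ_castSucc]
    have h0 : ((0 : Fin (m + 1)) : ℕ) = 0 := rfl
    rw [dif_pos h0]
    have hsucc : ∀ i : Fin m, (b ^ ((i.succ : Fin (m+1)) : ℕ) *
        (if _ : ((i.succ : Fin (m+1)) : ℕ) = 0 then
            lam * c ⟨m + 1 - 1, Nat.sub_lt (i.succ).pos one_pos⟩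
         else c ⟨((i.succ : Fin (m+1)) : ℕ) - 1, by have := (i.succ).isLt; omega⟩))
        = b * (b ^ ((i.castSucc : Fin (m+1)) : ℕ) * c i.castSucc) := by
      intro i
      rw [dif_neg (by simp)]
      have h1 : ((i.succ : Fin (m+1)) : ℕ) = (i : ℕ) + 1 := rfl
      have h2 : (⟨((i.succ : Fin (m+1)) : ℕ) - 1, by have := (i.succ).isLt; omega⟩ : Fin (m+1))
          = i.castSucc := by
        apply Fin.ext; simp [h1]
      rw [h2, h1, pow_succ, Fin.coe_castSucc]
      ring
    rw [Finset.sum_congr rfl fun i _ => hsucc i, ← Finset.mul_sum]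
    have h3 : (⟨m + 1 - 1, Nat.sub_lt (0 : Fin (m+1)).pos one_pos⟩ : Fin (m+1)) = Fin.last m := by
      apply Fin.ext; simp
    rw [h3, h0, pow_zero, one_mul, mul_add, add_comm]
    congr 1
    rw [Fin.val_last, ← mul_assoc, ← pow_succ', hb]

set_option maxHeartbeats 2000000 in
/-- Key arithmetic: the defining-set exponents avoid the Hermitian-dual collisions. -/
lemma aux_arith {q n δ s a0 j k : ℕ} (hq3 : q % 3 = 2) (hq5 : 5 ≤ q)
    (hn : q * q - 1 = 3 * n) (hδ : 3 * δ + 4 ≤ 2 * q) (hs : s = 1 ∨ s = 2)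
    (ha0 : a0 = if s = 1 then q + 2 else 2 * q + 1)
    (hj : j < δ) (hk : k < δ) :
    ¬ (q * q - 1) ∣ (q * (a0 + 3 * j) + (a0 + 3 * k)) := by
  rintro ⟨K, hK⟩
  set E := a0 + 3 * j with hE
  set E' := a0 + 3 * k with hE'
  have hKZ : (q : ℤ) * E + E' = ((q : ℤ) * q - 1) * K := by
    have h1 : 1 ≤ q * q := Nat.one_le_iff_ne_zero.mpr (by positivity)
    zify [h1] at hK
    exact_mod_cast hK
  have hq5' : (5 : ℤ) ≤ (q : ℤ) := by exact_mod_cast hq5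
  have hposq : (0 : ℤ) < (q : ℤ) * q - 1 := by nlinarith
  rcases hs with hs | hs
  · -- s = 1, a0 = q + 2
    have ha : a0 = q + 2 := by rw [ha0, if_pos hs]
    have hEl : (q : ℤ) + 2 ≤ E := by exact_mod_cast show q + 2 ≤ E by omega
    have hEu : (E : ℤ) ≤ 3 * q - 5 := by
      have h0 : E + 5 ≤ 3 * q := by omega
      have := (Nat.cast_le (α := ℤ)).mpr h0
      push_cast at this; linarith
    have hE'l : (q : ℤ) + 2 ≤ E' := by exact_mod_cast show q + 2 ≤ E' by omega
    have hE'u : (E' : ℤ) ≤ 3 * q - 5 := by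
      have h0 : E' + 5 ≤ 3 * q := by omega
      have := (Nat.cast_le (α := ℤ)).mpr h0
      push_cast at this; linarith
    have hK2 : (K : ℤ) = 2 := by
      have hKlb : ((q : ℤ) * q - 1) * 1 < ((q : ℤ) * q - 1) * K := by nlinarith
      have hKub : ((q : ℤ) * q - 1) * K < ((q : ℤ) * q - 1) * 3 := by nlinarith
      have h1 := lt_of_mul_lt_mul_left hKlb (le_of_lt hposq)
      have h2 := lt_of_mul_lt_mul_left hKub (le_of_lt hposq)
      omega
    rw [hK2] at hKZ
    obtain ⟨d, hd⟩ : ∃ d : ℤ, (E' : ℤ) = (E : ℤ) + ((q : ℤ) + 1) * d :=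
      ⟨2 * ((q : ℤ) - 1) - E, by linear_combination hKZ⟩
    have hd1 : d ≤ 1 := by
      by_contra hcon
      push_neg at hcon
      have h2d : (2 : ℤ) ≤ d := by omega
      have h3 := mul_le_mul_of_nonneg_left h2d (show (0:ℤ) ≤ (q : ℤ) + 1 by linarith)
      linarith
    have hd2 : -1 ≤ d := by
      by_contra hcon
      push_neg at hcon
      have h2d : d ≤ -2 := by omega
      have h3 := mul_le_mul_of_nonneg_left h2d (show (0:ℤ) ≤ (q : ℤ) + 1 by linarith)
      linarith
    interval_cases d
    · have h0 : ((q : ℤ) + 1) * ((E : ℤ) - (2 * q - 2 - (-1))) = 0 := by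
        linear_combination hKZ - hd
      have h1 : (E : ℤ) = 2 * q - 1 := by
        rcases mul_eq_zero.mp h0 with h | h
        · linarith
        · linarith
      omega
    · have h0 : ((q : ℤ) + 1) * ((E : ℤ) - (2 * q - 2 - 0)) = 0 := by
        linear_combination hKZ - hd
      have h1 : (E : ℤ) = 2 * q - 2 := by
        rcases mul_eq_zero.mp h0 with h | h
        · linarith
        · linarith
      omega
    · have h0 : ((q : ℤ) + 1) * ((E : ℤ) - (2 * q - 2 - 1)) = 0 := by
        linear_combination hKZ - hd
      have h1 : (E : ℤ) = 2 * q - 3 := by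
        rcases mul_eq_zero.mp h0 with h | h
        · linarith
        · linarith
      have h2 : (E' : ℤ) = 3 * q - 2 := by linarith
      omega
  · -- s = 2, a0 = 2q + 1
    have ha : a0 = 2 * q + 1 := by rw [ha0, if_neg (by omega)]
    have hEl : 2 * (q : ℤ) + 1 ≤ E := by exact_mod_cast show 2 * q + 1 ≤ E by omega
    have hEu : (E : ℤ) ≤ 4 * q - 6 := by
      have h0 : E + 6 ≤ 4 * q := by omega
      have := (Nat.cast_le (α := ℤ)).mpr h0
      push_cast at this; linarith
    have hE'l : 2 * (q : ℤ) + 1 ≤ E' := by exact_mod_cast show 2 * q + 1 ≤ E' by omega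
    have hE'u : (E' : ℤ) ≤ 4 * q - 6 := by
      have h0 : E' + 6 ≤ 4 * q := by omega
      have := (Nat.cast_le (α := ℤ)).mpr h0
      push_cast at this; linarith
    have hK3 : (K : ℤ) = 3 := by
      have hKlb : ((q : ℤ) * q - 1) * 2 < ((q : ℤ) * q - 1) * K := by nlinarith
      have hKub : ((q : ℤ) * q - 1) * K < ((q : ℤ) * q - 1) * 4 := by nlinarith
      have h1 := lt_of_mul_lt_mul_left hKlb (le_of_lt hposq)
      have h2 := lt_of_mul_lt_mul_left hKub (le_of_lt hposq)
      omega
    rw [hK3] at hKZ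
    obtain ⟨d, hd⟩ : ∃ d : ℤ, (E' : ℤ) = (E : ℤ) + ((q : ℤ) + 1) * d :=
      ⟨3 * ((q : ℤ) - 1) - E, by linear_combination hKZ⟩
    have hd1 : d ≤ 1 := by
      by_contra hcon
      push_neg at hcon
      have h2d : (2 : ℤ) ≤ d := by omega
      have h3 := mul_le_mul_of_nonneg_left h2d (show (0:ℤ) ≤ (q : ℤ) + 1 by linarith)
      linarith
    have hd2 : -1 ≤ d := by
      by_contra hcon
      push_neg at hcon
      have h2d : d ≤ -2 := by omega
      have h3 := mul_le_mul_of_nonneg_left h2d (show (0:ℤ) ≤ (q : ℤ) + 1 by linarith)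
      linarith
    interval_cases d
    · have h0 : ((q : ℤ) + 1) * ((E : ℤ) - (3 * q - 3 - (-1))) = 0 := by
        linear_combination hKZ - hd
      have h1 : (E : ℤ) = 3 * q - 2 := by
        rcases mul_eq_zero.mp h0 with h | h
        · linarith
        · linarith
      omega
    · have h0 : ((q : ℤ) + 1) * ((E : ℤ) - (3 * q - 3 - 0)) = 0 := by
        linear_combination hKZ - hd
      have h1 : (E : ℤ) = 3 * q - 3 := by
        rcases mul_eq_zero.mp h0 with h | h
        · linarith
        · linarith
      omega
    · have h0 : ((q : ℤ) + 1) * ((E : ℤ) - (3 * q - 3 - 1)) = 0 := by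
        linear_combination hKZ - hd
      have h1 : (E : ℤ) = 3 * q - 4 := by
        rcases mul_eq_zero.mp h0 with h | h
        · linarith
        · linarith
      have h2 : (E' : ℤ) = 4 * q - 3 := by linarith
      omega

open Finset in
lemma card_filter_val_lt {n k : ℕ} (h : k ≤ n) :
    ((Finset.univ : Finset (Fin n)).filter fun i : Fin n => (i : ℕ) < k).card = k := by
  have : ((Finset.univ : Finset (Fin n)).filter fun i : Fin n => (i : ℕ) < k)
      = (Finset.univ : Finset (Fin k)).map (Fin.castLEEmb h) := by
    ext i
    simp only [Finset.mem_filter, Finset.mem_univ, true_and, Finset.mem_map]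
    constructor
    · intro hi
      exact ⟨⟨(i : ℕ), hi⟩, by simp [Fin.castLEEmb]⟩
    · rintro ⟨a, ha⟩
      rw [← ha]
      simpa using a.isLt
  rw [this, Finset.card_map, Finset.card_univ, Fintype.card_fin]

theorem dual_containing_MDS_constacyclic_length_q_sq_sub_one_div_three
    {q : ℕ} (hq : IsPrimePow q) (hqodd : Odd q) (h3 : 3 ∣ q + 1)
    {F : Type} [Field F] [Fintype F] [DecidableEq F] (hF : Fintype.card F = q ^ 2)
    (lam : F) (hlam : lam ≠ 0) (hord : orderOf lam = 3) :
    ∀ δ : ℕ, 1 ≤ δ → δ ≤ 2 * (q - 2) / 3 →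
      ∃ C : Submodule F (Fin ((q ^ 2 - 1) / 3) → F),
        IsConstacyclic lam C ∧
        hermDual q C ⊆ (C : Set (Fin ((q ^ 2 - 1) / 3) → F)) ∧
        Module.finrank F C = (q ^ 2 - 1) / 3 - δ ∧
        IsLeast {w : ℕ | ∃ c ∈ C, c ≠ (0 : Fin ((q ^ 2 - 1) / 3) → F) ∧ hammingNorm c = w}
          (δ + 1) := by
  classical
  intro δ hδ1 hδ2
  obtain ⟨q3, hq3⟩ := h3
  have hq2 : 2 ≤ q := hq.two_le
  obtain ⟨qh, hqh⟩ := hqodd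
  have hq5 : 5 ≤ q := by omega
  have hqmod : q % 3 = 2 := by omega
  have hsq : q ^ 2 = q * q := sq q
  -- basic numeric facts
  have h3dvd : 3 ∣ q * q - 1 := by
    refine ⟨q3 * (q - 1), ?_⟩
    have h1 : (q + 1) * (q - 1) = q * q - 1 := by
      cases' Nat.exists_eq_add_of_le (show 1 ≤ q by omega) with m hm
      subst hm
      have : (1 + m) * (1 + m) = m * m + 2 * m + 1 := by ring
      rw [this]
      have : (1 + m + 1) * (1 + m - 1) = (m + 2) * m := by
        congr 1 <;> omega
      rw [this]
      have : (m + 2) * m = m * m + 2 * m := by ring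
      omega
    rw [← h1, hq3]
    ring
  set n := (q ^ 2 - 1) / 3 with hn
  have hn3 : q * q - 1 = 3 * n := by
    rw [hn, hsq, Nat.mul_div_cancel' h3dvd]
  have h5q : 5 * q ≤ q * q := Nat.mul_le_mul_right q hq5
  have hδ3 : 3 * δ + 4 ≤ 2 * q := by omega
  obtain ⟨P, hPeq, hP5⟩ : ∃ P : ℕ, q * q = P ∧ 5 * q ≤ P := ⟨q * q, rfl, h5q⟩
  rw [hPeq] at hn3
  have hδn : δ < n := by omega
  have h4q : 4 * q - 6 < 3 * n := by omega
  have hn1 : 1 ≤ n := by omega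
  have hn3' : q * q - 1 = 3 * n := by rw [hPeq]; exact hn3
  -- the cyclic group of units
  obtain ⟨g, hg⟩ := IsCyclic.exists_generator (α := Fˣ)
  have hcardu : Fintype.card Fˣ = q * q - 1 := by
    rw [Fintype.card_units, hF, hsq]
  have hog : orderOf g = 3 * n := by
    rw [orderOf_eq_card_of_forall_mem_zpowers hg, Nat.card_eq_fintype_card, hcardu, hn3']
  -- lambda as a power of g
  have holam : orderOf (Units.mk0 lam hlam) = 3 := by
    rw [← orderOf_units]; exact hord
  obtain ⟨m, hm⟩ : ∃ m : ℕ, g ^ m = Units.mk0 lam hlam := by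
    have h := hg (Units.mk0 lam hlam)
    rwa [← mem_powers_iff_mem_zpowers, Submonoid.mem_powers_iff] at h
  have hmne : g ^ m ≠ 1 := by
    intro h
    rw [hm] at h
    have := holam
    rw [h] at this
    simp at this
  have hnm : n ∣ m := by
    have h3 : (g ^ m) ^ (3 : ℕ) = 1 := by
      rw [hm, ← holam]; exact pow_orderOf_eq_one _
    rw [← pow_mul] at h3
    have hdvd := orderOf_dvd_of_pow_eq_one h3
    rw [hog] at hdvd
    obtain ⟨c, hc⟩ := hdvd
    refine ⟨c, Nat.eq_of_mul_eq_mul_left (show 0 < 3 by norm_num) ?_⟩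
    calc 3 * m = m * 3 := by ring
      _ = 3 * n * c := hc
      _ = 3 * (n * c) := by ring
  obtain ⟨t, hmt⟩ := hnm
  have ht3 : ¬ 3 ∣ t := by
    rintro ⟨u, rfl⟩
    apply hmne
    rw [hmt, show n * (3 * u) = 3 * n * u by ring, pow_mul, ← hog, pow_orderOf_eq_one, one_pow]
  set s := t % 3 with hs
  have hs12 : s = 1 ∨ s = 2 := by omega
  have hlam_eq : Units.mk0 lam hlam = g ^ (n * s) := by
    rw [← hm, hmt]
    apply pow_eq_pow_iff_modEq.mpr
    rw [hog]
    show n * t % (3 * n) = n * s % (3 * n)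
    have hu : n * t = n * s + 3 * n * (t / 3) := by
      conv_lhs => rw [show t = 3 * (t / 3) + t % 3 from by omega]
      rw [← hs]; ring
    rw [hu, Nat.add_mul_mod_self_left]
  set a0 : ℕ := if s = 1 then q + 2 else 2 * q + 1 with ha0
  have ha0m : a0 % 3 = s := by
    rcases hs12 with h | h <;> rw [ha0] <;> simp [h] <;> omega
  have ha0l : q + 2 ≤ a0 := by rcases hs12 with h | h <;> rw [ha0] <;> simp [h] <;> omega
  have ha0u : a0 ≤ 2 * q + 1 := by rcases hs12 with h | h <;> rw [ha0] <;> simp [h] <;> omega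
  -- the roots
  set bv : Fin δ → F := fun j => ((g ^ (a0 + 3 * (j : ℕ)) : Fˣ) : F) with hbv
  have hbv0 : ∀ j, bv j ≠ 0 := fun j => Units.ne_zero _
  have hexp_lt : ∀ j : Fin δ, a0 + 3 * (j : ℕ) < 3 * n := by
    intro j
    have := j.isLt
    omega
  have hbvn : ∀ j, bv j ^ n = lam := by
    intro j
    rw [hbv]
    rw [← Units.val_pow_eq_pow_val, ← pow_mul]
    have : g ^ ((a0 + 3 * (j : ℕ)) * n) = g ^ (n * s) := by
      apply pow_eq_pow_iff_modEq.mpr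
      rw [hog]
      show (a0 + 3 * (j : ℕ)) * n % (3 * n) = n * s % (3 * n)
      have hw : (a0 + 3 * (j : ℕ)) * n = n * s + 3 * n * ((a0 + 3 * (j : ℕ)) / 3) := by
        conv_lhs => rw [show a0 + 3 * (j : ℕ)
          = 3 * ((a0 + 3 * (j : ℕ)) / 3) + s from by omega]
        ring
      rw [hw, Nat.add_mul_mod_self_left]
    rw [this, ← hlam_eq]
    rfl
  have hbvinj : Function.Injective bv := by
    intro j k h
    rw [hbv] at h
    have h2 : (g ^ (a0 + 3 * (j : ℕ)) : Fˣ) = g ^ (a0 + 3 * (k : ℕ)) := Units.ext h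
    have h3 := pow_eq_pow_iff_modEq.mp h2
    rw [hog] at h3
    have hj := hexp_lt j
    have hk := hexp_lt k
    have h4 : (a0 + 3 * (j : ℕ)) % (3 * n) = (a0 + 3 * (k : ℕ)) % (3 * n) := h3
    rw [Nat.mod_eq_of_lt hj, Nat.mod_eq_of_lt hk] at h4
    exact Fin.ext (by omega)
  have hne1 : ∀ j k : Fin δ, bv j ^ q * bv k ≠ 1 := by
    intro j k h
    rw [hbv] at h
    rw [← Units.val_pow_eq_pow_val, ← Units.val_mul, ← pow_mul, ← pow_add] at h
    have h2 : (g ^ ((a0 + 3 * (j : ℕ)) * q + (a0 + 3 * (k : ℕ))) : Fˣ) = 1 := Units.ext h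
    have h3 := orderOf_dvd_of_pow_eq_one h2
    rw [hog, ← hn3'] at h3
    have := aux_arith (n := n) hqmod hq5 hn3' hδ3 hs12 ha0 j.isLt k.isLt
    rw [show q * (a0 + 3 * (j : ℕ)) + (a0 + 3 * (k : ℕ))
      = (a0 + 3 * (j : ℕ)) * q + (a0 + 3 * (k : ℕ)) from by ring] at this
    exact this h3
  -- lam^3 = 1
  have hl3 : lam ^ 3 = 1 := by rw [← hord]; exact pow_orderOf_eq_one lam
  -- the code
  set M : Matrix (Fin δ) (Fin n) F := Matrix.of fun j i => bv j ^ (i : ℕ) with hM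
  have hmem : ∀ c : Fin n → F, c ∈ LinearMap.ker M.mulVecLin ↔
      ∀ j : Fin δ, ∑ i : Fin n, bv j ^ (i : ℕ) * c i = 0 := by
    intro c
    rw [LinearMap.mem_ker, Matrix.mulVecLin_apply]
    constructor
    · intro h j
      have := congrFun h j
      simpa [Matrix.mulVec, dotProduct, hM] using this
    · intro h
      funext j
      simpa [Matrix.mulVec, dotProduct, hM] using h j
  refine ⟨LinearMap.ker M.mulVecLin, ?_, ?_, ?_, ?_⟩
  · -- constacyclic
    intro c hc
    rw [hmem] at hc ⊢
    intro j
    exact (aux_shift (bv j) lam (hbvn j) c).trans (by rw [hc j, mul_zero])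
  · -- Hermitian dual containing
    intro x hx
    rw [SetLike.mem_coe, hmem]
    intro j
    have hbq2 : bv j ^ (q * q) = bv j := by
      have := FiniteField.pow_card (bv j)
      rwa [hF, hsq] at this
    have hy : (fun i : Fin n => (bv j ^ q) ^ (i : ℕ)) ∈ LinearMap.ker M.mulVecLin := by
      rw [hmem]
      intro k
      have ht1 : bv k * bv j ^ q ≠ 1 := by rw [mul_comm]; exact hne1 j k
      have htn : (bv k * bv j ^ q) ^ n = 1 := by
        rw [mul_pow, hbvn k, ← pow_mul, mul_comm q n, pow_mul, hbvn j]
        calc lam * lam ^ q = lam ^ (q + 1) := by rw [pow_succ, mul_comm]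
          _ = (lam ^ 3) ^ q3 := by rw [← pow_mul, hq3]
          _ = 1 := by rw [hl3, one_pow]
      calc ∑ i : Fin n, bv k ^ (i : ℕ) * (bv j ^ q) ^ (i : ℕ)
          = ∑ i : Fin n, (bv k * bv j ^ q) ^ (i : ℕ) := by
            refine Finset.sum_congr rfl fun i _ => ?_
            rw [mul_pow]
        _ = ∑ i ∈ Finset.range n, (bv k * bv j ^ q) ^ i :=
            Fin.sum_univ_eq_sum_range _ n
        _ = ((bv k * bv j ^ q) ^ n - 1) / (bv k * bv j ^ q - 1) := geom_sum_eq ht1 n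
        _ = 0 := by rw [htn, sub_self, zero_div]
    have h0 := hx _ hy
    have hyq : ∀ i : Fin n, ((bv j ^ q) ^ (i : ℕ)) ^ q = bv j ^ (i : ℕ) := by
      intro i
      rw [← pow_mul, ← pow_mul, show q * ((i : ℕ) * q) = q * q * (i : ℕ) from by ring,
        pow_mul, hbq2]
    calc ∑ i : Fin n, bv j ^ (i : ℕ) * x i
        = ∑ i : Fin n, x i * ((bv j ^ q) ^ (i : ℕ)) ^ q := by
          refine Finset.sum_congr rfl fun i _ => ?_
          rw [hyq i, mul_comm]
      _ = 0 := h0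
  · -- dimension
    have hVdet : IsUnit (Matrix.vandermonde bv).det :=
      (Ne.isUnit (Matrix.det_vandermonde_ne_zero_iff.mpr hbvinj))
    have hsurj : Function.Surjective M.mulVecLin := by
      intro tv
      set xv : Fin δ → F := (Matrix.vandermonde bv)⁻¹.mulVec tv with hxv
      refine ⟨fun i : Fin n => if h : (i : ℕ) < δ then xv ⟨i, h⟩ else 0, ?_⟩
      rw [Matrix.mulVecLin_apply]
      have hfin : (Matrix.vandermonde bv).mulVec xv = tv := by
        rw [hxv, Matrix.mulVec_mulVec, Matrix.mul_nonsing_inv _ hVdet, Matrix.one_mulVec]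
      funext j
      rw [← hfin]
      show (∑ i : Fin n, M j i * _) = ∑ i : Fin δ, Matrix.vandermonde bv j i * xv i
      have hzero : ∀ i : Fin n, i ∈ Finset.univ →
          i ∉ (Finset.univ : Finset (Fin δ)).map (Fin.castLEEmb (le_of_lt hδn)) →
          M j i * (if h : (i : ℕ) < δ then xv ⟨i, h⟩ else 0) = 0 := by
        intro i _ hi
        rw [dif_neg, mul_zero]
        intro hlt
        exact hi (Finset.mem_map.mpr ⟨⟨(i : ℕ), hlt⟩, Finset.mem_univ _, Fin.ext rfl⟩)
      rw [← Finset.sum_subset (Finset.subset_univ _) hzero, Finset.sum_map]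
      refine Finset.sum_congr rfl fun i _ => ?_
      have hlt : ((Fin.castLEEmb (le_of_lt hδn) i : Fin n) : ℕ) < δ := by
        simpa [Fin.castLEEmb] using i.isLt
      rw [dif_pos hlt]
      rfl
    have hrange : LinearMap.range M.mulVecLin = ⊤ := LinearMap.range_eq_top.mpr hsurj
    have hrn := LinearMap.finrank_range_add_finrank_ker M.mulVecLin
    rw [hrange, finrank_top, Module.finrank_fin_fun, Module.finrank_fin_fun] at hrn
    omega
  · -- minimum distance
    -- lower bound: every nonzero codeword has weight ≥ δ + 1
    have hlb : ∀ c : Fin n → F, c ∈ LinearMap.ker M.mulVecLin → c ≠ 0 →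
        δ + 1 ≤ hammingNorm c := by
      intro c hcC hc0
      by_contra hcon
      push_neg at hcon
      set sset : Finset (Fin n) := {i | c i ≠ 0} with hsset
      have hnorm : hammingNorm c = sset.card := rfl
      have hcard : sset.card ≤ δ := by omega
      set tt := sset.card with htt
      set ee := sset.equivFin with hee
      set σ : Fin tt → Fin n := fun i => ((ee.symm i : sset) : Fin n) with hσ
      have hσinj : Function.Injective σ := by
        intro i i' h
        apply ee.symm.injective
        exact Subtype.ext h
      have hσmem : ∀ i, σ i ∈ sset := fun i => (ee.symm i).2
      set v : Fin tt → F := fun i => ((g ^ (3 * ((σ i : Fin n) : ℕ)) : Fˣ) : F) with hv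
      set D : Fin tt → F := fun i => ((g ^ (a0 * ((σ i : Fin n) : ℕ)) : Fˣ) : F) with hD
      have hvinj : Function.Injective v := by
        intro i i' h
        rw [hv] at h
        have h2 : (g ^ (3 * ((σ i : Fin n) : ℕ)) : Fˣ) = g ^ (3 * ((σ i' : Fin n) : ℕ)) :=
          Units.ext h
        have h3 := pow_eq_pow_iff_modEq.mp h2
        rw [hog] at h3
        have hlt1 : 3 * ((σ i : Fin n) : ℕ) < 3 * n := by have := (σ i).isLt; omega
        have hlt2 : 3 * ((σ i' : Fin n) : ℕ) < 3 * n := by have := (σ i').isLt; omega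
        have h4 : 3 * ((σ i : Fin n) : ℕ) % (3 * n) = 3 * ((σ i' : Fin n) : ℕ) % (3 * n) := h3
        rw [Nat.mod_eq_of_lt hlt1, Nat.mod_eq_of_lt hlt2] at h4
        exact hσinj (Fin.ext (by omega))
      have hDne : ∀ i, D i ≠ 0 := fun i => Units.ne_zero _
      have heqs : ∀ j : Fin tt, ∑ i, D i * v i ^ (j : ℕ) * (c (σ i)) = 0 := by
        intro j
        have hjδ : (j : ℕ) < δ := lt_of_lt_of_le j.isLt hcard
        set j' : Fin δ := ⟨(j : ℕ), hjδ⟩ with hj'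
        have hterm : ∀ i : Fin tt, D i * v i ^ (j : ℕ) * (c (σ i))
            = bv j' ^ ((σ i : Fin n) : ℕ) * c (σ i) := by
          intro i
          rw [hD, hv, hbv]
          congr 1
          rw [← Units.val_pow_eq_pow_val, ← Units.val_mul, ← pow_mul, ← pow_add,
            ← Units.val_pow_eq_pow_val, ← pow_mul]
          congr 2
          show a0 * ((σ i : Fin n) : ℕ) + 3 * ((σ i : Fin n) : ℕ) * (j : ℕ)
            = (a0 + 3 * ((j' : Fin δ) : ℕ)) * ((σ i : Fin n) : ℕ)
          rw [hj']
          ring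
        rw [Finset.sum_congr rfl fun i _ => hterm i]
        have hreindex : ∑ i : Fin tt, bv j' ^ ((σ i : Fin n) : ℕ) * c (σ i)
            = ∑ i ∈ sset, bv j' ^ (i : ℕ) * c i := by
          rw [← Finset.sum_coe_sort sset (fun i => bv j' ^ ((i : Fin n) : ℕ) * c i)]
          exact Equiv.sum_comp ee.symm (fun a => bv j' ^ ((a : Fin n) : ℕ) * c (a : Fin n))
        rw [hreindex]
        have hfull : ∑ i ∈ sset, bv j' ^ (i : ℕ) * c i
            = ∑ i : Fin n, bv j' ^ (i : ℕ) * c i := by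
          apply Finset.sum_subset (Finset.subset_univ _)
          intro i _ hi
          have : c i = 0 := by
            by_contra hne
            exact hi (by simp [hsset, hne])
          rw [this, mul_zero]
        rw [hfull]
        exact (hmem c).mp hcC j'
      have hczero := vand_zero v D hvinj hDne (fun i => c (σ i)) heqs
      obtain ⟨i0, hi0⟩ : ∃ i0, c i0 ≠ 0 := Function.ne_iff.mp hc0
      have hi0s : i0 ∈ sset := by simp [hsset, hi0]
      have : c (σ (ee ⟨i0, hi0s⟩)) = 0 := congrFun hczero (ee ⟨i0, hi0s⟩)
      rw [hσ] at this
      simp only [Equiv.symm_apply_apply] at this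
      exact hi0 this
    constructor
    · -- δ + 1 is attained
      set p : Polynomial F := ∏ j : Fin δ, (Polynomial.X - Polynomial.C (bv j)) with hp
      have hpm : p.Monic :=
        Polynomial.monic_prod_of_monic _ _ fun j _ => Polynomial.monic_X_sub_C _
      have hpd : p.natDegree = δ := by
        rw [hp, Polynomial.natDegree_prod_of_monic _ _
          (fun j _ => Polynomial.monic_X_sub_C _)]
        simp [Polynomial.natDegree_X_sub_C]
      set cw : Fin n → F := fun i => p.coeff (i : ℕ) with hcw
      have hcwC : cw ∈ LinearMap.ker M.mulVecLin := by
        rw [hmem]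
        intro j
        have hev : p.eval (bv j) = 0 := by
          rw [hp, Polynomial.eval_prod]
          exact Finset.prod_eq_zero (Finset.mem_univ j) (by simp)
        have hsum := Polynomial.eval_eq_sum_range'
          (show p.natDegree < n by rw [hpd]; exact hδn) (bv j)
        rw [hev] at hsum
        calc ∑ i : Fin n, bv j ^ (i : ℕ) * cw i
            = ∑ i ∈ Finset.range n, bv j ^ i * p.coeff i :=
              Fin.sum_univ_eq_sum_range (fun i => bv j ^ i * p.coeff i) n
          _ = ∑ i ∈ Finset.range n, p.coeff i * bv j ^ i :=
              Finset.sum_congr rfl fun i _ => mul_comm _ _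
          _ = 0 := hsum.symm
      have hcwδ : cw ⟨δ, hδn⟩ = 1 := by
        rw [hcw]
        show p.coeff δ = 1
        rw [← hpd]
        exact hpm.coeff_natDegree
      have hcw0 : cw ≠ 0 := by
        intro h
        rw [h] at hcwδ
        simp at hcwδ
      have hnormle : hammingNorm cw ≤ δ + 1 := by
        have hsub : ({i | cw i ≠ 0} : Finset (Fin n))
            ⊆ (Finset.univ : Finset (Fin n)).filter fun i : Fin n => (i : ℕ) < δ + 1 := by
          intro i hi
          simp only [Finset.mem_filter, Finset.mem_univ, true_and]
          by_contra hlt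
          push_neg at hlt
          have : cw i = 0 := by
            rw [hcw]
            exact Polynomial.coeff_eq_zero_of_natDegree_lt (by omega)
          simp [this] at hi
        calc hammingNorm cw ≤ ((Finset.univ : Finset (Fin n)).filter
              fun i : Fin n => (i : ℕ) < δ + 1).card := Finset.card_le_card hsub
          _ = δ + 1 := card_filter_val_lt (by omega)
      exact ⟨cw, hcwC, hcw0, le_antisymm hnormle (hlb cw hcwC hcw0)⟩
    · rintro w ⟨c, hcC, hc0, rfl⟩
      exact hlb c hcC hc0
end

section
/- Let q be an odd prime power with 5 dividing q+1, and let Z₂ = {1 + 5(2(q+1)/5 − 1 + j) : 1 ≤ j ≤ 3(q+1)/5 − 2}. Then Z₂ ∩ (−qZ₂) = ∅ modulo q²−1; that is, for all integers j, k with 1 ≤ j, k ≤ 3(q+1)/5 − 2, −q·(1 + 5(2(q+1)/5 − 1 + j)) ≢ 1 + 5(2(q+1)/5 − 1 + k) (mod q²−1). -/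
set_option maxHeartbeats 800000


theorem defining_set_Z2_dual_containing
    {q : ℕ} (hq : IsPrimePow q) (hqodd : Odd q) (h5 : 5 ∣ q + 1) :
    ∀ j k : ℤ, 1 ≤ j → j ≤ 3 * ((q : ℤ) + 1) / 5 - 2 → 1 ≤ k → k ≤ 3 * ((q : ℤ) + 1) / 5 - 2 →
      ¬ (-(q : ℤ) * (1 + 5 * (2 * ((q : ℤ) + 1) / 5 - 1 + j)) ≡
          1 + 5 * (2 * ((q : ℤ) + 1) / 5 - 1 + k) [ZMOD (q : ℤ) ^ 2 - 1]) := by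
  obtain ⟨m', hm'⟩ := h5
  have hq2 : 2 ≤ q := hq.two_le
  have hm : (q : ℤ) + 1 = 5 * (m' : ℤ) := by exact_mod_cast hm'
  set m : ℤ := (m' : ℤ) with hmdef
  have hq2' : (2 : ℤ) ≤ (q : ℤ) := by exact_mod_cast hq2
  have hm1 : 1 ≤ m := by omega
  have hq5 : (q : ℤ) = 5 * m - 1 := by omega
  have e1 : 2 * ((q : ℤ) + 1) / 5 = 2 * m := by omega
  have e2 : 3 * ((q : ℤ) + 1) / 5 = 3 * m := by omega
  intro j k hj1 hj2 hk1 hk2 h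
  rw [e2] at hj2 hk2
  rw [e1] at h
  have d := h.dvd
  rw [hq5] at d
  obtain ⟨c, hc⟩ := d
  -- hc : (1 + 5*(2m-1+k)) - (-(5m-1)*(1+5*(2m-1+j))) = ((5m-1)^2-1) * c
  have ht5 : 5 * ((5 * m - 1) * j + k) = 5 * ((5 * m ^ 2 - 2 * m) * (c - 2)) := by
    linear_combination hc
  have ht : (5 * m - 1) * j + k = (5 * m ^ 2 - 2 * m) * (c - 2) :=
    mul_left_cancel₀ (by norm_num) ht5
  set t : ℤ := c - 2 with htdef
  have hP : (0 : ℤ) < 5 * m ^ 2 - 2 * m := by nlinarith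
  have hSlb : 5 * m ≤ (5 * m - 1) * j + k := by
    nlinarith [mul_nonneg (by linarith : (0:ℤ) ≤ 5 * m - 1) (by linarith : (0:ℤ) ≤ j - 1)]
  have hSub : (5 * m - 1) * j + k ≤ 15 * m ^ 2 - 10 * m := by
    nlinarith [mul_nonneg (by linarith : (0:ℤ) ≤ 5 * m - 1) (by linarith : (0:ℤ) ≤ 3 * m - 2 - j)]
  have ht1 : 1 ≤ t := by
    by_contra hcon
    push_neg at hcon
    have h0 : t ≤ 0 := by omega
    have := mul_nonpos_of_nonneg_of_nonpos hP.le h0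
    linarith [ht, hSlb]
  have ht2 : t ≤ 2 := by
    by_contra hcon
    push_neg at hcon
    have h3 : 3 ≤ t := by omega
    nlinarith [mul_le_mul_of_nonneg_left h3 hP.le]
  interval_cases t
  · -- (5m-1)j + k = 5m^2 - 2m
    have hE : (5 * m - 1) * j + k = 5 * m ^ 2 - 2 * m := by linarith [ht]
    clear ht hc ht5
    rcases le_or_gt j (m - 1) with h' | h'
    · nlinarith [mul_nonneg (by linarith : (0:ℤ) ≤ 5 * m - 1) (by linarith : (0:ℤ) ≤ m - 1 - j)]
    · nlinarith [mul_nonneg (by linarith : (0:ℤ) ≤ 5 * m - 1) (by linarith : (0:ℤ) ≤ j - m)]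
  · -- (5m-1)j + k = 10m^2 - 4m
    have hE : (5 * m - 1) * j + k = 10 * m ^ 2 - 4 * m := by linarith [ht]
    clear ht hc ht5
    rcases le_or_gt j (2 * m - 1) with h' | h'
    · nlinarith [mul_nonneg (by linarith : (0:ℤ) ≤ 5 * m - 1) (by linarith : (0:ℤ) ≤ 2 * m - 1 - j)]
    · nlinarith [mul_nonneg (by linarith : (0:ℤ) ≤ 5 * m - 1) (by linarith : (0:ℤ) ≤ j - 2 * m)]
end

section
/- Let q be an odd prime power with 5 dividing q+1, let n = (q²−1)/5, and let λ ∈ F_{q²}* have order 5. Then for every integer δ with 1 ≤ δ ≤ 3(q+1)/5 − 2, there exists a Hermitian dual-containing λ-constacyclic code C of length n over F_{q²} with dim_{F_{q²}} C = n − δ and minimum Hamming distance δ + 1 (in particular, C is an MDS code with parameters [n, n−δ, δ+1]). -/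
private lemma keyArithZ (a u k m d c : ℤ) (ha : 2 ≤ a) (hu : u = (5*a-2)*c + 4)
    (hk0 : 0 ≤ k) (hk : k ≤ 3*a-3) (hm0 : 0 ≤ m) (hm : m ≤ 3*a-3)
    (heq : u*a + (5*a-1)*k + m = (5*a-2)*a*d) : False := by
  subst hu
  set E : ℤ := (5*a-2)*d - (5*a-2)*c - 4 - 5*k with hEdef
  have hME : m - k = a * E := by rw [hEdef]; ring_nf; linarith [heq]
  have hEub : E ≤ 2 := by nlinarith
  have hElb : -2 ≤ E := by nlinarith
  have hf : 4 + 5*k + E = (5*a-2) * (d - c) := by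
    have h2 : a * (4 + 5*k + E) = a * ((5*a-2) * (d - c)) := by rw [hEdef]; ring
    exact mul_left_cancel₀ (by linarith) h2
  have hflb : 1 ≤ d - c := by nlinarith
  have hfub : d - c ≤ 2 := by nlinarith
  interval_cases E <;> interval_cases h : (d - c) <;> omega

private lemma keyArith (a u k m : ℕ) (ha : 2 ≤ a) (hu : u % (5*a-2) = 4)
    (hk : k ≤ 3*a-3) (hm : m ≤ 3*a-3) : ¬ ((5*a-2)*a ∣ u*a + (5*a-1)*k + m) := by
  rintro ⟨d, hd⟩
  have h2 : 2 ≤ 5*a := by omega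
  have h3 : 3 ≤ 3*a := by omega
  obtain ⟨c, hc⟩ : ∃ c, u = (5*a-2)*c + 4 := by
    refine ⟨u / (5*a-2), ?_⟩
    conv_lhs => rw [← Nat.div_add_mod u (5*a-2)]
    rw [hu]
  apply keyArithZ (a : ℤ) (u : ℤ) k m d c (by exact_mod_cast ha)
  · zify [h2] at hc; linarith
  · exact Int.ofNat_nonneg k
  · zify [h3] at hk; linarith
  · exact Int.ofNat_nonneg m
  · zify [h3] at hm; linarith
  · zify [h2, (by omega : 1 ≤ 5*a)] at hd; linarith

private lemma geomZero {F : Type} [Field F] {t : F} {n : ℕ} (h1 : t ≠ 1) (hn : t ^ n = 1) :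
    ∑ i : Fin n, t ^ (i : ℕ) = 0 := by
  rw [Fin.sum_univ_eq_sum_range (fun i => t ^ i) n]
  have h := geom_sum_mul t n
  rw [hn, sub_self] at h
  rcases mul_eq_zero.mp h with h' | h'
  · exact h'
  · exact absurd (sub_eq_zero.mp h') h1

private lemma sum_eq_sum_subtype {ι F : Type} [Fintype ι] [DecidableEq ι] [AddCommMonoid F]
    (s : Finset ι) (f : ι → F) (hf : ∀ i ∉ s, f i = 0) :
    ∑ i, f i = ∑ x : s, f x := by
  rw [Finset.sum_coe_sort s f]
  exact (Finset.sum_subset (Finset.subset_univ s) (fun x _ hx => hf x hx)).symm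

private lemma sum_eq_sum_castLE {F : Type} [AddCommMonoid F] {d n : ℕ} (h : d ≤ n)
    (f : Fin n → F) (hf : ∀ i : Fin n, d ≤ (i : ℕ) → f i = 0) :
    ∑ i, f i = ∑ j : Fin d, f (Fin.castLE h j) := by
  classical
  have h2 : ∑ j : Fin d, f (Fin.castLE h j)
      = ∑ i ∈ Finset.univ.map (Fin.castLEEmb h), f i := by
    rw [Finset.sum_map Finset.univ (Fin.castLEEmb h) f]
    rfl
  rw [h2]
  refine (Finset.sum_subset (Finset.subset_univ _) (fun x _ hx => ?_)).symm
  apply hf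
  by_contra hc
  push_neg at hc
  exact hx (Finset.mem_map.mpr ⟨⟨(x : ℕ), hc⟩, Finset.mem_univ _, by
    simp [Fin.castLEEmb, Fin.castLE]⟩)

private lemma sum_shift {F : Type} [Field F] {n : ℕ} (hn : 0 < n) (c c' : Fin n → F)
    (lam t : F) (htn : t ^ n = lam)
    (h0 : c' ⟨0, hn⟩ = lam * c ⟨n-1, Nat.sub_lt hn one_pos⟩)
    (hsucc : ∀ (i : ℕ) (h : i + 1 < n), c' ⟨i+1, h⟩ = c ⟨i, by omega⟩)
    (hc : ∑ i : Fin n, t ^ (i : ℕ) * c i = 0) :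
    ∑ i : Fin n, t ^ (i : ℕ) * c' i = 0 := by
  obtain ⟨m, rfl⟩ : ∃ m, n = m + 1 := ⟨n - 1, by omega⟩
  have key : ∀ b : Fin (m+1) → F,
      ∑ i : Fin (m+1), t ^ (i:ℕ) * b i
        = ∑ i ∈ Finset.range (m+1), t ^ i * (if h : i < m + 1 then b ⟨i, h⟩ else 0) := by
    intro b
    rw [← Fin.sum_univ_eq_sum_range (fun i => t ^ i * (if h : i < m + 1 then b ⟨i, h⟩ else 0))]
    exact Finset.sum_congr rfl (fun i _ => by rw [dif_pos i.isLt])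
  rw [key c']
  rw [key c] at hc
  rw [Finset.sum_range_succ']
  rw [Finset.sum_range_succ] at hc
  have hgoalsum : ∑ k ∈ Finset.range m,
      t ^ (k+1) * (if h : k + 1 < m + 1 then c' ⟨k+1, h⟩ else 0)
      = ∑ k ∈ Finset.range m, t * (t ^ k * (if h : k < m + 1 then c ⟨k, h⟩ else 0)) := by
    refine Finset.sum_congr rfl (fun k hk => ?_)
    rw [Finset.mem_range] at hk
    rw [dif_pos (by omega : k + 1 < m + 1), dif_pos (by omega : k < m + 1),
      hsucc k (by omega)]
    ring
  have hsum := eq_neg_of_add_eq_zero_left hc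
  rw [hgoalsum, ← Finset.mul_sum, hsum, dif_pos hn, h0, dif_pos (by omega : m < m + 1)]
  have hmm : (⟨m + 1 - 1, Nat.sub_lt hn one_pos⟩ : Fin (m+1)) = ⟨m, by omega⟩ := rfl
  rw [hmm, ← htn]
  ring

theorem dual_containing_MDS_constacyclic_length_q_sq_sub_one_div_five
    {q : ℕ} (hq : IsPrimePow q) (hqodd : Odd q) (h5 : 5 ∣ q + 1)
    {F : Type} [Field F] [Fintype F] [DecidableEq F] (hF : Fintype.card F = q ^ 2)
    (lam : F) (hlam : lam ≠ 0) (hord : orderOf lam = 5) :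
    ∀ δ : ℕ, 1 ≤ δ → δ ≤ 3 * (q + 1) / 5 - 2 →
      ∃ C : Submodule F (Fin ((q ^ 2 - 1) / 5) → F),
        IsConstacyclic lam C ∧
        hermDual q C ⊆ (C : Set (Fin ((q ^ 2 - 1) / 5) → F)) ∧
        Module.finrank F C = (q ^ 2 - 1) / 5 - δ ∧
        IsLeast {w : ℕ | ∃ c ∈ C, c ≠ (0 : Fin ((q ^ 2 - 1) / 5) → F) ∧ hammingNorm c = w}
          (δ + 1) := by
  intro δ hδ1 hδ2
  classical
  -- numerology
  have hq9 : 9 ≤ q := by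
    obtain ⟨r, hr⟩ := hqodd
    omega
  set a := (q+1)/5 with ha
  have ha5 : 5 * a = q + 1 := Nat.mul_div_cancel' h5
  have ha2 : 2 ≤ a := by omega
  set N := (q^2 - 1)/5 with hNdef
  have hqq : q ^ 2 - 1 = (q+1) * (q-1) := by
    have := Nat.sq_sub_sq q 1
    simpa using this
  have hN5 : 5 * N = q^2 - 1 := Nat.mul_div_cancel' ⟨a*(q-1), by rw [hqq, ← ha5]; ring⟩
  have hNa : N = (q-1) * a := by
    have h : 5 * N = 5 * ((q-1) * a) := by rw [hN5, hqq, ← ha5]; ring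
    omega
  have hδ3 : δ ≤ 3*a - 2 := by
    have h3a : 3*(q+1)/5 = 3*a := by
      rw [← ha5, show 3*(5*a) = 5*(3*a) from by ring, Nat.mul_div_cancel_left _ (by norm_num)]
    rw [h3a] at hδ2
    exact hδ2
  have hδN : δ + 1 ≤ N := by
    have h8a : 8 * a ≤ (q-1) * a := Nat.mul_le_mul_right a (by omega)
    omega
  have hN0 : 0 < N := by omega
  -- group generator
  have hcardU : Fintype.card Fˣ = q^2 - 1 := by rw [Fintype.card_units, hF]
  obtain ⟨g, hgen⟩ := IsCyclic.exists_generator (α := Fˣ)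
  have hg : orderOf g = 5 * N := by
    rw [orderOf_eq_card_of_forall_mem_zpowers hgen, Nat.card_eq_fintype_card, hcardU, hN5]
  set lamu : Fˣ := Units.mk0 lam hlam with hlamu
  have hlamcoe : (lamu : F) = lam := rfl
  have hlamuord : orderOf lamu = 5 := by
    rw [← hord, ← hlamcoe, orderOf_units]
  obtain ⟨w, hw⟩ : ∃ w : ℕ, g ^ w = lamu := by
    have := hgen lamu
    rwa [← mem_powers_iff_mem_zpowers, Submonoid.mem_powers_iff] at this
  have hlam5 : lamu ^ 5 = 1 := by rw [← hlamuord]; exact pow_orderOf_eq_one lamu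
  have hNw : N ∣ w := by
    have hdvd : orderOf g ∣ w * 5 := orderOf_dvd_of_pow_eq_one (by rw [pow_mul, hw, hlam5])
    rw [hg] at hdvd
    have : 5 * N ∣ 5 * w := by rwa [mul_comm w 5] at hdvd
    exact (Nat.mul_dvd_mul_iff_left (by norm_num : 0 < 5)).mp this
  obtain ⟨s', hs'⟩ := hNw
  set s := s' % 5 with hsdef
  have hgN5 : (g ^ N) ^ 5 = 1 := by
    rw [← pow_mul, mul_comm N 5, ← hg]; exact pow_orderOf_eq_one g
  have hgNs : (g ^ N) ^ s = lamu := by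
    rw [← hw, hs', pow_mul]
    conv_rhs => rw [show s' = 5 * (s' / 5) + s' % 5 by omega]
    rw [pow_add, pow_mul, hgN5, one_pow, one_mul]
  have hs0 : s ≠ 0 := by
    intro h0
    rw [h0, pow_zero] at hgNs
    rw [← hgNs, orderOf_one] at hlamuord
    norm_num at hlamuord
  have hs4 : s < 5 := Nat.mod_lt _ (by norm_num)
  -- choice of u
  have hcop : Nat.Coprime 5 (q - 1) :=
    (Nat.Prime.coprime_iff_not_dvd (by norm_num)).mpr (by omega)
  obtain ⟨u', hu5', hu4'⟩ := Nat.chineseRemainder hcop s 4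
  set u := u' % (5*(q-1)) with hudef
  have hult : u < 5*(q-1) := Nat.mod_lt _ (by omega)
  have hu5 : u % 5 = s := by
    have h1 : u % 5 = u' % 5 := Nat.mod_mod_of_dvd u' ⟨q-1, rfl⟩
    have := hu5'
    rw [Nat.ModEq, Nat.mod_eq_of_lt hs4] at this
    rw [h1, this]
  have hu4 : u % (q-1) = 4 := by
    have h1 : u % (q-1) = u' % (q-1) := Nat.mod_mod_of_dvd u' ⟨5, by ring⟩
    have := hu4'
    rw [Nat.ModEq, Nat.mod_eq_of_lt (by omega : 4 < q - 1)] at this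
    rw [h1, this]
  obtain ⟨v, hv⟩ : ∃ v, u = 5*v + s := ⟨u / 5, by omega⟩
  -- field-element tools
  set gF : F := (g : F) with hgF
  have hgF0 : gF ≠ 0 := Units.ne_zero g
  have hgpow : ∀ E : ℕ, gF ^ E = ((g ^ E : Fˣ) : F) := fun E =>
    (Units.val_pow_eq_pow_val g E).symm
  have hpow_one : ∀ E : ℕ, gF ^ E = 1 ↔ 5*N ∣ E := by
    intro E
    rw [hgpow]
    constructor
    · intro h
      have hu : g ^ E = 1 := Units.ext h
      rw [← hg]
      exact orderOf_dvd_of_pow_eq_one hu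
    · intro h
      rw [← hg] at h
      rw [orderOf_dvd_iff_pow_eq_one] at h
      rw [h, Units.val_one]
  have hpow5N : gF ^ (5*N) = 1 := (hpow_one (5*N)).mpr dvd_rfl
  have hgNlam : gF ^ (N * s) = lam := by
    rw [hgpow, pow_mul, hgNs, hlamcoe]
  have halphaN : ∀ k : ℕ, (gF ^ (u + 5*k)) ^ N = lam := by
    intro k
    rw [← pow_mul, hv, show (5*v + s + 5*k) * N = N * s + 5*N*(v + k) from by ring,
      pow_add, hgNlam, pow_mul, hpow5N, one_pow, mul_one]
  have hdist : ∀ x y : ℕ, x < 5*N → y < 5*N → gF ^ x = gF ^ y → x = y := by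
    intro x y hx hy hxy
    rw [hgpow, hgpow] at hxy
    have := pow_inj_mod.mp (Units.ext hxy)
    rwa [hg, Nat.mod_eq_of_lt hx, Nat.mod_eq_of_lt hy] at this
  -- Vandermonde determinants
  have hVdet : ∀ (d : ℕ) (e' : Fin d → ℕ), Function.Injective e' → (∀ j, e' j < 5*N) →
      (Matrix.vandermonde (fun j => gF ^ (e' j))).det ≠ 0 := by
    intro d e' he' hb
    rw [Matrix.det_vandermonde]
    apply Finset.prod_ne_zero_iff.mpr
    intro i _
    apply Finset.prod_ne_zero_iff.mpr
    intro j hj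
    rw [sub_ne_zero]
    intro hij
    have hejei : e' j = e' i := hdist _ _ (hb j) (hb i) hij
    have : j = i := he' hejei
    rw [Finset.mem_Ioi] at hj
    exact (ne_of_gt hj) this
  have hN2 : 2*(q-1) ≤ N := by
    rw [hNa]
    have := Nat.mul_le_mul_left (q-1) ha2
    omega
  have hδleN : δ ≤ N := by omega
  -- the code
  set M : Matrix (Fin δ) (Fin N) F :=
    Matrix.of (fun k i => (gF ^ (u + 5*(k:ℕ))) ^ (i:ℕ)) with hM
  set C : Submodule F (Fin N → F) := LinearMap.ker (M.mulVecLin) with hC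
  have hmem : ∀ c : Fin N → F, c ∈ C ↔
      ∀ k : Fin δ, ∑ i : Fin N, (gF ^ (u + 5*(k:ℕ))) ^ (i:ℕ) * c i = 0 := by
    intro c
    rw [hC, LinearMap.mem_ker, funext_iff]
    simp [Matrix.mulVecLin_apply, Matrix.mulVec, dotProduct, hM]
  -- surjectivity of the check map
  set V : Matrix (Fin δ) (Fin δ) F :=
    Matrix.vandermonde (fun k : Fin δ => gF ^ (u + 5*(k:ℕ))) with hV
  have hVd : V.det ≠ 0 := by
    rw [hV]
    apply hVdet δ (fun k : Fin δ => u + 5*(k:ℕ))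
    · intro ki kj hk
      have hk' : u + 5*(ki:ℕ) = u + 5*(kj:ℕ) := hk
      exact Fin.ext (by omega)
    · intro j
      have hj := j.isLt
      omega
  have hVu : IsUnit V.det := isUnit_iff_ne_zero.mpr hVd
  have hsurj : ∀ y : Fin δ → F, ∃ c, M.mulVec c = y := by
    intro y
    set x : Fin δ → F := V⁻¹.mulVec y with hx
    refine ⟨fun i => if h : (i:ℕ) < δ then x ⟨i, h⟩ else 0, ?_⟩
    funext k
    show ∑ i : Fin N, M k i * _ = y k
    rw [sum_eq_sum_castLE hδleN
      (fun i => M k i * (if h : (i:ℕ) < δ then x ⟨(i:ℕ), h⟩ else 0))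
      (fun i hi => by rw [dif_neg (by omega), mul_zero])]
    have hterm : ∀ j : Fin δ, M k (Fin.castLE hδleN j)
        * (if h : ((Fin.castLE hδleN j):ℕ) < δ then x ⟨((Fin.castLE hδleN j):ℕ), h⟩ else 0)
        = V k j * x j := by
      intro j
      simp only [Fin.coe_castLE]
      rw [dif_pos j.isLt]
      rfl
    rw [Finset.sum_congr rfl (fun j _ => hterm j)]
    have : ∑ j : Fin δ, V k j * x j = V.mulVec x k := rfl
    rw [this, hx, Matrix.mulVec_mulVec, Matrix.mul_nonsing_inv V hVu, Matrix.one_mulVec]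
  have hrange : LinearMap.range M.mulVecLin = ⊤ := by
    rw [LinearMap.range_eq_top]
    intro y
    obtain ⟨c, hc⟩ := hsurj y
    exact ⟨c, hc⟩
  have hrank : Module.finrank F C = N - δ := by
    have h := LinearMap.finrank_range_add_finrank_ker (M.mulVecLin)
    rw [hrange, finrank_top, Module.finrank_fin_fun, Module.finrank_fin_fun, ← hC] at h
    omega
  -- minimum distance lower bound
  have hmin : ∀ c, c ∈ C → c ≠ 0 → δ + 1 ≤ hammingNorm c := by
    intro c hcC hc0
    by_contra hlt
    push_neg at hlt
    set S : Finset (Fin N) := Finset.univ.filter (fun i => c i ≠ 0) with hS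
    have hScard : S.card = hammingNorm c := rfl
    set w' := S.card with hw'
    have hwδ : w' ≤ δ := by omega
    set e : Fin w' ≃ {i // i ∈ S} := S.equivFin.symm with he
    have hzero : ∀ i : Fin N, i ∈ S → c i = 0 := by
      set vv : Fin w' → F := fun j => gF ^ (5 * (((e j) : Fin N) : ℕ)) with hvv
      set B : Matrix (Fin w') (Fin w') F := (Matrix.vandermonde vv).transpose with hB
      have hBdet : B.det ≠ 0 := by
        rw [hB, Matrix.det_transpose]
        apply hVdet w' (fun j => 5 * (((e j) : Fin N) : ℕ))
        · intro j1 j2 h12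
          have h12' : 5 * (((e j1) : Fin N) : ℕ) = 5 * (((e j2) : Fin N) : ℕ) := h12
          have hval : ((e j1) : Fin N) = ((e j2) : Fin N) := Fin.ext (by omega)
          exact e.injective (Subtype.ext hval)
        · intro j
          have := ((e j) : Fin N).isLt
          omega
      set y : Fin w' → F := fun j => gF ^ (u * (((e j) : Fin N) : ℕ)) * c (e j) with hy
      have hyz : B.mulVec y = 0 := by
        funext k
        have hk' : (k:ℕ) < δ := lt_of_lt_of_le k.isLt hwδ
        show ∑ j : Fin w', B k j * y j = 0
        have hterm : ∀ j : Fin w', B k j * y j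
            = (fun i : Fin N => (gF ^ (u + 5*(k:ℕ))) ^ (i:ℕ) * c i) ((e j) : Fin N) := by
          intro j
          show (vv j) ^ (k:ℕ) * (gF ^ (u * (((e j) : Fin N):ℕ)) * c (e j)) = _
          rw [hvv]
          simp only []
          rw [← pow_mul, ← mul_assoc, ← pow_add]
          have hexp : 5 * (((e j) : Fin N):ℕ) * (k:ℕ) + u * (((e j) : Fin N):ℕ)
              = (u + 5*(k:ℕ)) * (((e j) : Fin N):ℕ) := by ring
          rw [hexp, pow_mul]
        rw [Finset.sum_congr rfl (fun j _ => hterm j)]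
        rw [Equiv.sum_comp e (fun i : {i // i ∈ S} =>
          (fun i : Fin N => (gF ^ (u + 5*(k:ℕ))) ^ (i:ℕ) * c i) (i : Fin N))]
        rw [← sum_eq_sum_subtype S (fun i : Fin N => (gF ^ (u + 5*(k:ℕ))) ^ (i:ℕ) * c i)
          (fun i hi => by
            have hci : c i = 0 := by
              by_contra hci
              exact hi (Finset.mem_filter.mpr ⟨Finset.mem_univ _, hci⟩)
            rw [hci, mul_zero])]
        exact (hmem c).mp hcC ⟨(k:ℕ), hk'⟩
      have hy0 := Matrix.eq_zero_of_mulVec_eq_zero hBdet hyz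
      intro i hi
      have hji := congrFun hy0 (S.equivFin ⟨i, hi⟩)
      rw [hy] at hji
      simp only [Pi.zero_apply] at hji
      have heq : e (S.equivFin ⟨i, hi⟩) = ⟨i, hi⟩ := Equiv.symm_apply_apply _ _
      rw [heq] at hji
      rcases mul_eq_zero.mp hji with h' | h'
      · exact absurd h' (pow_ne_zero _ hgF0)
      · exact h'
    apply hc0
    funext i
    by_cases hi : c i = 0
    · exact hi
    · exact hzero i (Finset.mem_filter.mpr ⟨Finset.mem_univ _, hi⟩)
  -- existence of a codeword of weight exactly δ+1
  have hexists : ∃ c, c ∈ C ∧ c ≠ 0 ∧ hammingNorm c = δ + 1 := by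
    by_contra hcon
    push_neg at hcon
    have hall : ∀ c, c ∈ C → c ≠ 0 → δ + 2 ≤ hammingNorm c := by
      intro c h1 h2
      have := hmin c h1 h2
      have hne := hcon c h1 h2
      omega
    set π : (Fin N → F) →ₗ[F] (Fin (N - (δ+1)) → F) :=
      LinearMap.funLeft F F (fun j : Fin (N - (δ+1)) => (⟨δ+1+(j:ℕ), by omega⟩ : Fin N)) with hπ
    have hinj : Function.Injective (π.comp C.subtype) := by
      intro c1 c2 h12
      apply Subtype.ext
      have hsub : ((c1 : Fin N → F) - (c2 : Fin N → F)) ∈ C := sub_mem c1.2 c2.2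
      set cc : Fin N → F := (c1 : Fin N → F) - (c2 : Fin N → F) with hcc
      have hπcc : π cc = 0 := by
        rw [hcc, map_sub]
        have : π (c1 : Fin N → F) = π (c2 : Fin N → F) := h12
        rw [this, sub_self]
      have hvan : ∀ i : Fin N, δ + 1 ≤ (i:ℕ) → cc i = 0 := by
        intro i hi
        have := congrFun hπcc ⟨(i:ℕ) - (δ+1), by omega⟩
        simp only [Pi.zero_apply] at this
        rw [hπ] at this
        have hiN := i.isLt
        have h2 : cc ⟨δ+1+((i:ℕ)-(δ+1)), by omega⟩ = 0 := this
        have h3 : (⟨δ+1+((i:ℕ)-(δ+1)), by omega⟩ : Fin N) = i :=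
          Fin.ext (by show δ+1+((i:ℕ)-(δ+1)) = (i:ℕ); omega)
        rwa [h3] at h2
      have hnorm : hammingNorm cc ≤ δ + 1 := by
        have hsubset : ∀ i ∈ Finset.univ.filter (fun i => cc i ≠ 0),
            (i : ℕ) ∈ Finset.range (δ+1) := by
          intro i hi
          rw [Finset.mem_filter] at hi
          rw [Finset.mem_range]
          by_contra hge
          exact hi.2 (hvan i (by omega))
        have := Finset.card_le_card_of_injOn (fun i : Fin N => (i:ℕ)) hsubset
          (fun i _ j _ hij => Fin.ext hij)
        rwa [Finset.card_range] at this
      by_contra hne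
      have hccne : cc ≠ 0 := by
        intro h0
        apply hne
        have := sub_eq_zero.mp (hcc ▸ h0)
        exact this
      have := hall cc hsub hccne
      omega
    have hle := LinearMap.finrank_le_finrank_of_injective hinj
    rw [Module.finrank_fin_fun] at hle
    rw [hrank] at hle
    omega
  -- constacyclicity
  have hcyc : IsConstacyclic lam C := by
    intro c hc
    rw [hmem] at hc
    rw [hmem]
    intro k
    exact sum_shift hN0 c _ lam (gF ^ (u + 5*(k:ℕ))) (halphaN (k:ℕ))
      (by simp) (by intro i h; simp) (hc k)
  -- Hermitian dual containment
  have hFrob : gF ^ (q^2) = gF := by rw [← hF]; exact FiniteField.pow_card gF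
  have hdualsub : hermDual q C ⊆ (C : Set (Fin N → F)) := by
    intro x hx
    rw [SetLike.mem_coe, hmem]
    intro k
    set y : Fin N → F := fun i => (gF ^ ((u + 5*(k:ℕ)) * q)) ^ (i:ℕ) with hydef
    have hyC : y ∈ C := by
      rw [hmem]
      intro m
      have hterm : ∀ i : Fin N, (gF ^ (u + 5*(m:ℕ)))^(i:ℕ) * y i
          = (gF ^ ((u + 5*(m:ℕ)) + (u + 5*(k:ℕ)) * q))^(i:ℕ) := by
        intro i
        rw [hydef]
        simp only []
        rw [← mul_pow, ← pow_add]
      rw [Finset.sum_congr rfl (fun i _ => hterm i)]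
      have hE : (u + 5*(m:ℕ)) + (u + 5*(k:ℕ)) * q
          = 5*(u*a + (5*a-1)*(k:ℕ) + (m:ℕ)) := by
        rw [show 5*a-1 = q by omega,
          show 5*(u*a + q*(k:ℕ) + (m:ℕ)) = u*(5*a) + 5*(q*(k:ℕ)) + 5*(m:ℕ) from by ring,
          ha5]
        ring
      apply geomZero
      · intro h1
        rw [hpow_one] at h1
        rw [hE] at h1
        have h2 : N ∣ u*a + (5*a-1)*(k:ℕ) + (m:ℕ) :=
          (Nat.mul_dvd_mul_iff_left (by norm_num : 0 < 5)).mp h1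
        rw [hNa, show q - 1 = 5*a-2 by omega] at h2
        exact keyArith a u (k:ℕ) (m:ℕ) ha2
          (by rwa [show 5*a-2 = q-1 by omega])
          (by have := k.isLt; omega) (by have := m.isLt; omega) h2
      · rw [← pow_mul, hpow_one, hE]
        exact ⟨(u*a + (5*a-1)*(k:ℕ) + (m:ℕ)) * N / (5*N) * 0 + (u*a + (5*a-1)*(k:ℕ) + (m:ℕ)), by ring⟩
    have h0 := hx y hyC
    have hterm2 : ∀ i : Fin N, x i * (y i)^q = (gF ^ (u + 5*(k:ℕ)))^(i:ℕ) * x i := by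
      intro i
      have hFrob' : ∀ z : F, (z ^ q) ^ q = z := by
        intro z
        rw [← pow_mul, ← pow_two, ← hF]
        exact FiniteField.pow_card z
      have e1 : y i = (gF ^ ((u + 5*(k:ℕ)) * (i:ℕ))) ^ q := by
        rw [hydef]
        simp only []
        rw [← pow_mul, ← pow_mul]
        congr 1
        ring
      rw [e1, hFrob' (gF ^ ((u + 5*(k:ℕ)) * (i:ℕ))), pow_mul]
      ring
    rw [Finset.sum_congr rfl (fun i _ => hterm2 i)] at h0
    exact h0
  -- assemble
  refine ⟨C, hcyc, hdualsub, hrank, ?_, ?_⟩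
  · obtain ⟨c, h1, h2, h3⟩ := hexists
    exact ⟨c, h1, h2, h3⟩
  · rintro w ⟨c, hcC, hc0, hwc⟩
    rw [← hwc]
    exact hmin c hcC hc0
end

section
/- Let q be an odd prime power with 7 dividing q+1, and let Z₃ = {1 + 7(3(q+1)/7 − 1 + j) : 1 ≤ j ≤ 4(q+1)/7 − 2}. Then Z₃ ∩ (−qZ₃) = ∅ modulo q²−1; that is, for all integers j, k with 1 ≤ j, k ≤ 4(q+1)/7 − 2, −q·(1 + 7(3(q+1)/7 − 1 + j)) ≢ 1 + 7(3(q+1)/7 − 1 + k) (mod q²−1). -/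
theorem defining_set_Z3_dual_containing
    {q : ℕ} (hq : IsPrimePow q) (hqodd : Odd q) (h7 : 7 ∣ q + 1) :
    ∀ j k : ℤ, 1 ≤ j → j ≤ 4 * ((q : ℤ) + 1) / 7 - 2 → 1 ≤ k → k ≤ 4 * ((q : ℤ) + 1) / 7 - 2 →
      ¬ (-(q : ℤ) * (1 + 7 * (3 * ((q : ℤ) + 1) / 7 - 1 + j)) ≡
          1 + 7 * (3 * ((q : ℤ) + 1) / 7 - 1 + k) [ZMOD (q : ℤ) ^ 2 - 1]) := by
  intro j k hj1 hj2 hk1 hk2 h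
  -- q ≥ 13
  obtain ⟨n, hn⟩ := hqodd
  obtain ⟨r, hr⟩ := h7
  have hq13 : 13 ≤ q := by omega
  have hm' : (7:ℤ) ∣ (q:ℤ) + 1 := by exact_mod_cast Int.natCast_dvd_natCast.mpr ⟨r, hr⟩
  obtain ⟨m, hm⟩ := hm'
  have hqz : (13:ℤ) ≤ (q:ℤ) := by exact_mod_cast hq13
  -- simplify the divisions
  have hd3 : 3 * ((q : ℤ) + 1) / 7 = 3 * m := by
    rw [hm]; rw [show 3 * (7 * m) = 7 * (3 * m) by ring]
    exact Int.mul_ediv_cancel_left _ (by norm_num)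
  have hd4 : 4 * ((q : ℤ) + 1) / 7 = 4 * m := by
    rw [hm]; rw [show 4 * (7 * m) = 7 * (4 * m) by ring]
    exact Int.mul_ediv_cancel_left _ (by norm_num)
  rw [hd3] at h
  rw [hd4] at hj2 hk2
  -- divisibility of 7*(q*j+k)
  obtain ⟨c, hc⟩ := h.dvd
  have hdvd : (q:ℤ)^2 - 1 ∣ 7 * ((q:ℤ) * j + k) := by
    refine ⟨c - 3, ?_⟩
    linear_combination hc + 3 * ((q:ℤ) + 1) * hm
  obtain ⟨t, ht⟩ := hdvd
  have hq2pos : (0:ℤ) < (q:ℤ)^2 - 1 := by nlinarith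
  have ht1 : 1 ≤ t := by nlinarith
  have ht3 : t ≤ 3 := by nlinarith [hm]
  set s : ℤ := t * (q:ℤ) - 7 * j with hs
  have hks : t + 7 * k = (q:ℤ) * s := by rw [hs]; linear_combination ht
  have hs1 : 1 ≤ s := by nlinarith
  have hs3 : s ≤ 3 := by nlinarith [hm]
  have hjq : 7 * j = t * (q:ℤ) - s := by rw [hs]; ring
  have hqm : (q:ℤ) = 7 * m - 1 := by linarith [hm]
  interval_cases t <;> interval_cases s <;> omega
end

section
/- Let q be an odd prime power with 7 dividing q+1, let n = (q²−1)/7, and let λ ∈ F_{q²}* have order 7. Then for every integer δ with 1 ≤ δ ≤ 4(q+1)/7 − 2, there exists a Hermitian dual-containing λ-constacyclic code C of length n over F_{q²} with dim_{F_{q²}} C = n − δ and minimum Hamming distance δ + 1 (in particular, C is an MDS code with parameters [n, n−δ, δ+1]). -/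
section Helpers

lemma nt_int (M R S c : ℤ) (hm : 1 ≤ M) (hR0 : 0 ≤ R) (hS0 : 0 ≤ S)
    (hRb : R ≤ 4 * M - 3) (hSb : S ≤ 4 * M - 3)
    (hc : 7 * M + (7 * M - 1) * R + S = M * (7 * M - 2) * c) : False := by
  set d : ℤ := (7 * M - 2) * c - 7 - 7 * R with hd
  have hmd : M * d = S - R := by rw [hd]; ring_nf; linarith [hc]
  have hd3 : d ≤ 3 := by nlinarith
  have hd3' : -3 ≤ d := by nlinarith
  have heq : 7 + 7 * R + d = (7 * M - 2) * c := by rw [hd]; ring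
  have hc1 : 1 ≤ c := by nlinarith
  have hc3 : c ≤ 3 := by nlinarith
  interval_cases c <;> interval_cases d <;> omega

open Matrix in
lemma det_unit_aux {F : Type} [Field F] [DecidableEq F] {w : ℕ} (β x : Fin w → F)
    (hβ : ∀ j, β j ≠ 0) (hx : Function.Injective x) :
    IsUnit (Matrix.of fun r j : Fin w => β j * x j ^ (r : ℕ)).det := by
  have hM : (Matrix.of fun r j : Fin w => β j * x j ^ (r : ℕ))
      = (Matrix.vandermonde x)ᵀ * Matrix.diagonal β := by
    ext r j
    rw [Matrix.mul_diagonal]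
    simp [Matrix.vandermonde, mul_comm]
  rw [hM, Matrix.det_mul, Matrix.det_transpose, Matrix.det_vandermonde, Matrix.det_diagonal]
  refine (IsUnit.mul ?_ ?_)
  · rw [isUnit_iff_ne_zero]
    refine Finset.prod_ne_zero_iff.2 fun i _ => Finset.prod_ne_zero_iff.2 fun j hj => ?_
    have : i ≠ j := by
      intro h; subst h; simp at hj
    exact sub_ne_zero.2 fun h => this (hx h.symm)
  · rw [isUnit_iff_ne_zero]
    exact Finset.prod_ne_zero_iff.2 fun j _ => hβ j

lemma mulVec_eq_zero_aux {F : Type} [Field F] [DecidableEq F] {w : ℕ}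
    {M : Matrix (Fin w) (Fin w) F} (h : IsUnit M.det) {v : Fin w → F}
    (hv : M.mulVec v = 0) : v = 0 := by
  have := congrArg (M⁻¹.mulVec) hv
  rwa [Matrix.mulVec_mulVec, Matrix.nonsing_inv_mul _ h, Matrix.one_mulVec,
    Matrix.mulVec_zero] at this

/-- kernel-triviality for Vandermonde-type square systems -/
lemma vand_kernel {F : Type} [Field F] [DecidableEq F] {n w : ℕ} (A z : F) (hA : A ≠ 0)
    (hz : Function.Injective fun i : Fin n => z ^ (i : ℕ))
    (α : Fin w → F) (hα : ∀ r, α r = A * z ^ (r : ℕ))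
    (ι : Fin w → Fin n) (hι : Function.Injective ι)
    (v : Fin w → F)
    (hv : ∀ r : Fin w, ∑ j, v j * α r ^ ((ι j : ℕ)) = 0) : v = 0 := by
  set β : Fin w → F := fun j => A ^ ((ι j : ℕ)) with hβ
  set x : Fin w → F := fun j => z ^ ((ι j : ℕ)) with hx
  have hxinj : Function.Injective x := by
    intro a b hab
    exact hι (hz hab)
  have hdet := det_unit_aux β x (fun j => pow_ne_zero _ hA) hxinj
  refine mulVec_eq_zero_aux hdet ?_
  funext r
  rw [Matrix.mulVec]
  show ∑ j, _ = _
  rw [show (0 : Fin w → F) r = 0 from rfl, ← hv r]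
  refine Finset.sum_congr rfl fun j _ => ?_
  simp only [Matrix.of_apply, hβ, hx, hα r, dotProduct]
  rw [mul_pow, ← pow_mul, ← pow_mul, mul_comm (r : ℕ) (ι j : ℕ), pow_mul]
  ring

lemma vand_solve {F : Type} [Field F] [DecidableEq F] {n w : ℕ} (A z : F) (hA : A ≠ 0)
    (hz : Function.Injective fun i : Fin n => z ^ (i : ℕ))
    (α : Fin w → F) (hα : ∀ r, α r = A * z ^ (r : ℕ))
    (ι : Fin w → Fin n) (hι : Function.Injective ι)
    (t : Fin w → F) :
    ∃ v : Fin w → F, ∀ r : Fin w, ∑ j, v j * α r ^ ((ι j : ℕ)) = t r := by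
  set β : Fin w → F := fun j => A ^ ((ι j : ℕ)) with hβ
  set x : Fin w → F := fun j => z ^ ((ι j : ℕ)) with hx
  have hxinj : Function.Injective x := fun a b hab => hι (hz hab)
  have hdet := det_unit_aux β x (fun j => pow_ne_zero _ hA) hxinj
  set M : Matrix (Fin w) (Fin w) F := Matrix.of fun r j : Fin w => β j * x j ^ (r : ℕ) with hM
  refine ⟨M⁻¹.mulVec t, fun r => ?_⟩
  have hMv : M.mulVec (M⁻¹.mulVec t) = t := by
    rw [Matrix.mulVec_mulVec, Matrix.mul_nonsing_inv _ hdet, Matrix.one_mulVec]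
  have := congrFun hMv r
  rw [Matrix.mulVec] at this
  rw [← this]
  show _ = ∑ j, _
  refine Finset.sum_congr rfl fun j _ => ?_
  simp only [hM, Matrix.of_apply, hβ, hx, hα r]
  rw [mul_pow, ← pow_mul, ← pow_mul, mul_comm (r : ℕ) (ι j : ℕ)]
  ring

/-- evaluation of the "coefficient polynomial" at `β`, as a linear map -/
def evalL {F : Type} [Field F] {n : ℕ} (β : F) : (Fin n → F) →ₗ[F] F where
  toFun c := ∑ i, c i * β ^ (i : ℕ)
  map_add' a b := by simp [add_mul, Finset.sum_add_distrib]
  map_smul' a c := by simp [Finset.mul_sum, mul_assoc]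

@[simp] lemma evalL_apply {F : Type} [Field F] {n : ℕ} (β : F) (c : Fin n → F) :
    evalL β c = ∑ i, c i * β ^ (i : ℕ) := rfl

lemma sum_extend {M : Type} [AddCommMonoid M] {n w : ℕ} (hw : w ≤ n) (f : Fin n → M)
    (hf : ∀ i : Fin n, ¬((i : ℕ) < w) → f i = 0) :
    ∑ i, f i = ∑ j : Fin w, f (Fin.castLE hw j) := by
  have hmem : ∀ i : Fin n, i ∈ Finset.univ.map (Fin.castLEEmb hw) ↔ (i : ℕ) < w := by
    intro i
    simp only [Finset.mem_map, Finset.mem_univ, true_and, Fin.castLEEmb_apply]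
    constructor
    · rintro ⟨j, rfl⟩; exact j.isLt
    · intro h; exact ⟨⟨(i : ℕ), h⟩, rfl⟩
  have h2 : ∑ j : Fin w, f (Fin.castLE hw j)
      = ∑ i ∈ Finset.univ.map (Fin.castLEEmb hw), f i := by
    rw [Finset.sum_map Finset.univ (Fin.castLEEmb hw) f]
    rfl
  rw [h2]
  exact (Finset.sum_subset (Finset.subset_univ _)
    (fun i _ hi => hf i (fun h => hi ((hmem i).2 h)))).symm

lemma geomSumZero {F : Type} [Field F] {n : ℕ} (γ : F) (h1 : γ ≠ 1) (hn : γ ^ n = 1) :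
    ∑ i : Fin n, γ ^ (i : ℕ) = 0 := by
  rw [Fin.sum_univ_eq_sum_range (fun i => γ ^ i)]
  have := geom_sum_mul γ n
  rw [hn, sub_self] at this
  rcases mul_eq_zero.1 this with h | h
  · exact h
  · exact absurd (sub_eq_zero.1 h) h1

lemma shift_sum {F : Type} [Field F] {nn : ℕ} (lam βv : F) (hβ : βv ^ (nn + 1) = lam)
    (c : Fin (nn + 1) → F) (hc : ∑ i, c i * βv ^ (i : ℕ) = 0) :
    ∑ i : Fin (nn + 1),
      (if _ : (i : ℕ) = 0 then lam * c ⟨nn + 1 - 1, by omega⟩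
        else c ⟨(i : ℕ) - 1, by have := i.isLt; omega⟩) * βv ^ (i : ℕ) = 0 := by
  rw [Fin.sum_univ_succ]
  rw [dif_pos (show ((0 : Fin (nn + 1)) : ℕ) = 0 from rfl)]
  have hterm : ∀ i : Fin nn,
      (if _ : ((i.succ : Fin (nn + 1)) : ℕ) = 0 then lam * c ⟨nn + 1 - 1, by omega⟩
        else c ⟨((i.succ : Fin (nn + 1)) : ℕ) - 1, by have := (i.succ : Fin (nn+1)).isLt; omega⟩)
        * βv ^ ((i.succ : Fin (nn + 1)) : ℕ)
      = (c i.castSucc * βv ^ (i : ℕ)) * βv := by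
    intro i
    rw [dif_neg (by simp [Fin.val_succ])]
    have h1 : (⟨((i.succ : Fin (nn + 1)) : ℕ) - 1, by have := (i.succ : Fin (nn+1)).isLt; omega⟩
        : Fin (nn + 1)) = i.castSucc := by
      apply Fin.ext; simp [Fin.val_succ]
    rw [h1, Fin.val_succ, pow_succ]
    ring
  rw [Finset.sum_congr rfl (fun i _ => hterm i), ← Finset.sum_mul]
  rw [Fin.sum_univ_castSucc] at hc
  simp only [Fin.coe_castSucc] at hc
  have h2 : ∑ i : Fin nn, c i.castSucc * βv ^ (i : ℕ)
      = -(c (Fin.last nn) * βv ^ ((Fin.last nn : Fin (nn+1)) : ℕ)) := by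
    linear_combination hc
  rw [h2]
  have h3 : (⟨nn + 1 - 1, by omega⟩ : Fin (nn + 1)) = Fin.last nn := by
    apply Fin.ext; simp
  rw [h3, ← hβ]
  simp [Fin.val_last, pow_succ]
  ring

end Helpers

theorem dual_containing_MDS_constacyclic_length_q_sq_sub_one_div_seven
    {q : ℕ} (hq : IsPrimePow q) (hqodd : Odd q) (h7 : 7 ∣ q + 1)
    {F : Type} [Field F] [Fintype F] [DecidableEq F] (hF : Fintype.card F = q ^ 2)
    (lam : F) (hlam : lam ≠ 0) (hord : orderOf lam = 7) :
    ∀ δ : ℕ, 1 ≤ δ → δ ≤ 4 * (q + 1) / 7 - 2 →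
      ∃ C : Submodule F (Fin ((q ^ 2 - 1) / 7) → F),
        IsConstacyclic lam C ∧
        hermDual q C ⊆ (C : Set (Fin ((q ^ 2 - 1) / 7) → F)) ∧
        Module.finrank F C = (q ^ 2 - 1) / 7 - δ ∧
        IsLeast {w : ℕ | ∃ c ∈ C, c ≠ (0 : Fin ((q ^ 2 - 1) / 7) → F) ∧ hammingNorm c = w}
          (δ + 1) := by
  intro δ hδ1 hδ2
  obtain ⟨m, hq7⟩ := h7
  have hq2 : 2 ≤ q := hq.two_le
  have hm2 : 2 ≤ m := by obtain ⟨t, ht⟩ := hqodd; omega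
  have hq13 : 13 ≤ q := by omega
  have hδ4m : δ ≤ 4 * m - 2 := by omega
  obtain ⟨n, hn⟩ : ∃ n, (q ^ 2 - 1) / 7 = n := ⟨_, rfl⟩
  rw [hn]
  have hsq : q ^ 2 - 1 = (q + 1) * (q - 1) := by simpa using Nat.sq_sub_sq q 1
  have hneq : n = m * (q - 1) := by
    rw [← hn, hsq, hq7, mul_assoc]
    exact Nat.mul_div_cancel_left _ (by norm_num)
  have h7n : 7 * n = q ^ 2 - 1 := by
    rw [hneq, hsq, hq7]; ring
  have hneq2 : n = m * (7 * m - 2) := by rw [hneq]; congr 1; omega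
  have hδn1 : δ + 1 ≤ n := by
    have h12 : m * 12 ≤ m * (7 * m - 2) := Nat.mul_le_mul_left m (by omega)
    omega
  have hδn : δ ≤ n := by omega
  have hn0 : 0 < n := by omega
  -- group theory
  obtain ⟨g, hg⟩ := IsCyclic.exists_generator (α := Fˣ)
  have hgord : orderOf g = 7 * n := by
    rw [orderOf_eq_card_of_forall_mem_zpowers hg, Nat.card_eq_fintype_card,
      Fintype.card_units, hF, h7n]
  set lamu : Fˣ := Units.mk0 lam hlam with hlamu
  have hlamval : (lamu : F) = lam := rfl
  have hlamuord : orderOf lamu = 7 := by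
    rw [← hord, ← hlamval, orderOf_units]
  obtain ⟨u, hu⟩ := (Submonoid.mem_powers_iff _ _).mp
    (mem_powers_iff_mem_zpowers.mpr (hg lamu))
  have hlam7 : lamu ^ 7 = 1 := by rw [← hlamuord]; exact pow_orderOf_eq_one lamu
  have hdvd7u : 7 * n ∣ u * 7 := by
    rw [← hgord]
    exact orderOf_dvd_of_pow_eq_one (by rw [pow_mul, hu, hlam7])
  have hnu : n ∣ u := by
    have h := hdvd7u
    rw [mul_comm u 7] at h
    exact (Nat.mul_dvd_mul_iff_left (by norm_num : 0 < 7)).mp h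
  set k : ℕ := u / n with hk
  have huk : u = n * k := (Nat.mul_div_cancel' hnu).symm
  -- choose b
  haveI : NeZero (q - 1) := ⟨by omega⟩
  have hcop : Nat.Coprime 7 (q - 1) :=
    (Nat.Prime.coprime_iff_not_dvd (by norm_num)).mpr (by omega)
  set u7 : (ZMod (q - 1))ˣ := ZMod.unitOfCoprime 7 hcop with hu7def
  have hu7 : (u7 : ZMod (q - 1)) = 7 := by
    rw [hu7def, ZMod.coe_unitOfCoprime]; push_cast; ring
  set bz : ZMod (q - 1) := ((u7⁻¹ : (ZMod (q - 1))ˣ) : ZMod (q - 1)) * (7 - (k : ZMod (q - 1)))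
    with hbz
  set b : ℕ := bz.val with hbdef
  have hbcast : ((b : ℕ) : ZMod (q - 1)) = bz := ZMod.natCast_rightInverse bz
  have h71 : (7 : ZMod (q - 1)) * ((u7⁻¹ : (ZMod (q - 1))ˣ) : ZMod (q - 1)) = 1 := by
    rw [← hu7]; exact_mod_cast u7.mul_inv
  have hbk : ((k + 7 * b : ℕ) : ZMod (q - 1)) = ((7 : ℕ) : ZMod (q - 1)) := by
    push_cast
    rw [hbcast, hbz, ← mul_assoc, h71, one_mul]
    ring
  have hmod : (k + 7 * b) ≡ 7 [MOD q - 1] := (ZMod.natCast_eq_natCast_iff _ _ _).mp hbk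
  obtain ⟨t, ht⟩ : ∃ t : ℤ, ((k : ℤ) + 7 * b) = 7 + ((q : ℤ) - 1) * t := by
    obtain ⟨t, ht⟩ := hmod.dvd
    refine ⟨-t, ?_⟩
    have hcast : ((q - 1 : ℕ) : ℤ) = (q : ℤ) - 1 := by
      push_cast [Nat.cast_sub (by omega : 1 ≤ q)]; ring
    rw [hcast] at ht
    push_cast at ht ⊢
    linarith
  -- the roots
  set A : F := ((g ^ (k + 7 * b) : Fˣ) : F) with hA
  set z : F := ((g ^ 7 : Fˣ) : F) with hz
  set α : Fin δ → F := fun r => ((g ^ (k + 7 * (b + (r : ℕ))) : Fˣ) : F) with hα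
  have hαAz : ∀ r : Fin δ, α r = A * z ^ (r : ℕ) := by
    intro r
    simp only [hα, hA, hz]
    have h1 : g ^ (k + 7 * (b + (r : ℕ))) = g ^ (k + 7 * b) * (g ^ 7) ^ (r : ℕ) := by
      rw [← pow_mul, ← pow_add]; ring_nf
    rw [h1, Units.val_mul, Units.val_pow_eq_pow_val, Units.val_pow_eq_pow_val]
  have hAne : A ≠ 0 := Units.ne_zero _
  have hz7ord : orderOf (g ^ 7 : Fˣ) = n := by
    rw [orderOf_pow, hgord]
    have : Nat.gcd (7 * n) 7 = 7 := by
      rw [Nat.gcd_comm]; exact Nat.gcd_eq_left ⟨n, rfl⟩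
    rw [this]
    exact Nat.mul_div_cancel_left _ (by norm_num)
  have hzinj : Function.Injective fun i : Fin n => z ^ (i : ℕ) := by
    intro i j hij
    simp only [hz] at hij
    have hij' : (g ^ 7 : Fˣ) ^ (i : ℕ) = (g ^ 7 : Fˣ) ^ (j : ℕ) := by
      apply Units.ext
      push_cast [Units.val_pow_eq_pow_val]
      exact hij
    have hmodeq := pow_eq_pow_iff_modEq.mp hij'
    rw [hz7ord] at hmodeq
    exact Fin.ext (by
      have h1 := Nat.mod_eq_of_lt i.isLt
      have h2 := Nat.mod_eq_of_lt j.isLt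
      rw [Nat.ModEq] at hmodeq
      omega)
  have hgN : g ^ (7 * n) = 1 := by rw [← hgord]; exact pow_orderOf_eq_one g
  have hαn : ∀ r : Fin δ, α r ^ n = lam := by
    intro r
    simp only [hα]
    rw [← Units.val_pow_eq_pow_val]
    have h1 : (g ^ (k + 7 * (b + (r : ℕ)))) ^ n = lamu := by
      rw [← pow_mul]
      have h2 : (k + 7 * (b + (r : ℕ))) * n = n * k + (7 * n) * (b + (r : ℕ)) := by ring
      rw [h2, pow_add, ← huk, hu, pow_mul, hgN, one_pow, mul_one]
    rw [h1, hlamval]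
  have hlamq1 : lam ^ (q + 1) = 1 := orderOf_dvd_iff_pow_eq_one.mp (by rw [hord]; exact ⟨m, hq7⟩)
  have hlampow7 : lam ^ 7 = 1 := by rw [← hord]; exact pow_orderOf_eq_one lam
  have hfix : ∀ r : Fin δ, α r ^ q ^ 2 = α r := by
    intro r
    have h1 : α r ^ (q ^ 2 - 1) = 1 := by
      rw [← h7n, mul_comm, pow_mul, hαn r, hlampow7]
    calc α r ^ q ^ 2 = α r ^ (q ^ 2 - 1) * α r := by rw [← pow_succ]; congr 1; omega
    _ = α r := by rw [h1, one_mul]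
  have hqZ : (q : ℤ) = 7 * (m : ℤ) - 1 := by
    have : ((q : ℤ) + 1) = 7 * (m : ℤ) := by exact_mod_cast congrArg (Nat.cast : ℕ → ℤ) hq7
    linarith
  have hnZ : (n : ℤ) = (m : ℤ) * (7 * (m : ℤ) - 2) := by
    have : (n : ℤ) = (m : ℤ) * ((q : ℤ) - 1) := by
      rw [hneq]; push_cast [Nat.cast_sub (by omega : 1 ≤ q)]; ring
    rw [this, hqZ]; ring
  have hne1 : ∀ r s : Fin δ, (α r) ^ q * α s ≠ 1 := by
    intro r s h
    set E : ℕ := q * (k + 7 * (b + (r : ℕ))) + (k + 7 * (b + (s : ℕ))) with hE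
    have hunit : g ^ E = (1 : Fˣ) := by
      apply Units.ext
      rw [hE, pow_add, mul_comm q _, pow_mul, Units.val_mul, Units.val_pow_eq_pow_val,
        Units.val_pow_eq_pow_val, Units.val_one]
      simp only [hα] at h
      exact h
    have hdvd : 7 * n ∣ E := by rw [← hgord]; exact orderOf_dvd_of_pow_eq_one hunit
    have hdvdZ : ((7 * n : ℕ) : ℤ) ∣ (E : ℤ) := Int.natCast_dvd_natCast.mpr hdvd
    have hEZ : (E : ℤ) = ((q : ℤ) + 1) * ((k : ℤ) + 7 * b)
        + 7 * ((q : ℤ) * ((r : ℕ) : ℤ) + ((s : ℕ) : ℤ)) := by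
      rw [hE]; push_cast; ring
    rw [hEZ, ht] at hdvdZ
    have h7nZ : ((7 * n : ℕ) : ℤ) = 7 * (n : ℤ) := by push_cast; ring
    rw [h7nZ] at hdvdZ
    have hq21 : ((q : ℤ) + 1) * ((q : ℤ) - 1) = 7 * (n : ℤ) := by
      have h2 : ((q ^ 2 - 1 : ℕ) : ℤ) = (q : ℤ) ^ 2 - 1 := by
        push_cast [Nat.cast_sub (Nat.one_le_pow 2 q (by omega))]; ring
      have h1 : (q : ℤ) ^ 2 - 1 = 7 * (n : ℤ) := by
        rw [← h2, ← h7n]; push_cast; ring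
      linear_combination h1
    have hdvd2 : 7 * (n : ℤ) ∣ 7 * (((q : ℤ) + 1) + (q : ℤ) * ((r : ℕ) : ℤ) + ((s : ℕ) : ℤ)) := by
      have hrw : ((q : ℤ) + 1) * (7 + ((q : ℤ) - 1) * t)
            + 7 * ((q : ℤ) * ((r : ℕ) : ℤ) + ((s : ℕ) : ℤ))
          = 7 * (((q : ℤ) + 1) + (q : ℤ) * ((r : ℕ) : ℤ) + ((s : ℕ) : ℤ)) + (7 * (n : ℤ)) * t := by
        rw [← hq21]; ring
      rw [hrw] at hdvdZ
      exact (dvd_add_right ⟨t, rfl⟩).mp (by rwa [add_comm] at hdvdZ)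
    have hdvd3 : (n : ℤ) ∣ (((q : ℤ) + 1) + (q : ℤ) * ((r : ℕ) : ℤ) + ((s : ℕ) : ℤ)) :=
      (mul_dvd_mul_iff_left (by norm_num : (7 : ℤ) ≠ 0)).mp hdvd2
    obtain ⟨c, hc⟩ := hdvd3
    have hrb : ((r : ℕ) : ℤ) ≤ 4 * (m : ℤ) - 3 := by
      have h0 : (r : ℕ) < δ := r.isLt
      omega
    have hsb : ((s : ℕ) : ℤ) ≤ 4 * (m : ℤ) - 3 := by
      have h0 : (s : ℕ) < δ := s.isLt
      omega
    have hmZ : (1 : ℤ) ≤ (m : ℤ) := by exact_mod_cast (show 1 ≤ m by omega)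
    have hcfin : 7 * (m : ℤ) + (7 * (m : ℤ) - 1) * ((r : ℕ) : ℤ) + ((s : ℕ) : ℤ)
        = (m : ℤ) * (7 * (m : ℤ) - 2) * c := by
      rw [hqZ, hnZ] at hc
      linear_combination hc
    exact nt_int (m : ℤ) ((r : ℕ) : ℤ) ((s : ℕ) : ℤ) c hmZ (Int.natCast_nonneg _)
      (Int.natCast_nonneg _) hrb hsb hcfin
  -- the code
  set Phi : (Fin n → F) →ₗ[F] (Fin δ → F) := LinearMap.pi (fun r => evalL (α r)) with hPhi
  have hmem : ∀ c : Fin n → F,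
      c ∈ LinearMap.ker Phi ↔ ∀ r : Fin δ, ∑ i, c i * α r ^ (i : ℕ) = 0 := by
    intro c
    rw [LinearMap.mem_ker, hPhi, funext_iff]
    constructor
    · intro h r; simpa using h r
    · intro h r; simpa using h r
  -- minimum weight lemma
  have hzero : ∀ c : Fin n → F, c ∈ LinearMap.ker Phi → hammingNorm c ≤ δ → c = 0 := by
    intro c hcC hcw
    set T : Finset (Fin n) := Finset.univ.filter (fun i => c i ≠ 0) with hT
    have hTcard : T.card ≤ δ := hcw
    set e := T.orderIsoOfFin rfl with he
    have hιinj : Function.Injective (fun j : Fin T.card => ((e j : T) : Fin n)) := by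
      intro a b hab
      exact e.toEquiv.injective (Subtype.ext hab)
    have hveq : ∀ r : Fin T.card,
        ∑ j : Fin T.card, c ((e j : T) : Fin n)
          * (α (Fin.castLE hTcard r)) ^ ((((e j : T) : Fin n)) : ℕ) = 0 := by
      intro r
      have h1 := (hmem c).mp hcC (Fin.castLE hTcard r)
      have h2 : ∑ i ∈ T, c i * α (Fin.castLE hTcard r) ^ (i : ℕ) = 0 := by
        rw [← h1]
        exact Finset.sum_subset (Finset.subset_univ T) (fun i _ hi => by
          have hci : c i = 0 := by
            by_contra hcc
            exact hi (Finset.mem_filter.mpr ⟨Finset.mem_univ i, hcc⟩)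
          rw [hci, zero_mul])
      rw [← h2, ← Finset.sum_coe_sort T (fun i => c i * α (Fin.castLE hTcard r) ^ (i : ℕ))]
      exact Fintype.sum_equiv e.toEquiv _ _ (fun j => rfl)
    have hvz := vand_kernel A z hAne hzinj
      (fun r : Fin T.card => α (Fin.castLE hTcard r))
      (fun r => hαAz (Fin.castLE hTcard r))
      (fun j => ((e j : T) : Fin n)) hιinj
      (fun j => c ((e j : T) : Fin n)) hveq
    funext i
    by_contra hci
    have hiT : i ∈ T := Finset.mem_filter.mpr ⟨Finset.mem_univ i, hci⟩
    have h3 : c ((e (e.symm ⟨i, hiT⟩) : T) : Fin n) = 0 := by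
      have := congrFun hvz (e.symm ⟨i, hiT⟩)
      simpa using this
    rw [OrderIso.apply_symm_apply] at h3
    exact hci h3
  refine ⟨LinearMap.ker Phi, ?_, ?_, ?_, ?_, ?_⟩
  -- 1: constacyclic
  · intro c hc
    rw [hmem] at hc
    rw [hmem]
    intro r
    obtain ⟨nn, rfl⟩ : ∃ nn, n = nn + 1 := ⟨n - 1, by omega⟩
    exact shift_sum lam (α r) (hαn r) c (hc r)
  -- 2: hermitian dual containing
  · intro x hx
    rw [SetLike.mem_coe, hmem]
    intro r
    set y : Fin n → F := fun i => ((α r) ^ q) ^ (i : ℕ) with hy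
    have hyC : y ∈ LinearMap.ker Phi := by
      rw [hmem]
      intro s
      have hγ1 : (α r) ^ q * α s ≠ 1 := hne1 r s
      have hγn : ((α r) ^ q * α s) ^ n = 1 := by
        rw [mul_pow, ← pow_mul, mul_comm q n, pow_mul, hαn r, hαn s, ← pow_succ, hlamq1]
      have hstep : ∑ i : Fin n, y i * α s ^ (i : ℕ)
          = ∑ i : Fin n, ((α r) ^ q * α s) ^ (i : ℕ) :=
        Finset.sum_congr rfl (fun i _ => by rw [hy]; rw [mul_pow])
      rw [hstep]
      exact geomSumZero _ hγ1 hγn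
    have h0 := hx y hyC
    have hstep2 : ∑ i : Fin n, x i * α r ^ (i : ℕ) = ∑ i : Fin n, x i * (y i) ^ q := by
      refine Finset.sum_congr rfl fun i _ => ?_
      congr 1
      rw [hy]
      rw [← pow_mul, ← pow_mul,
        show q * ((i : ℕ) * q) = q ^ 2 * (i : ℕ) by ring, pow_mul, hfix r]
    rw [hstep2]
    exact h0
  -- 3: dimension
  · have hsurj : Function.Surjective Phi := by
      intro tv
      have hinj : Function.Injective (fun j : Fin δ => Fin.castLE hδn j) :=
        fun a b hab => Fin.castLE_injective _ hab
      obtain ⟨v, hv⟩ := vand_solve A z hAne hzinj α hαAz _ hinj tv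
      refine ⟨fun i => if h : (i : ℕ) < δ then v ⟨(i : ℕ), h⟩ else 0, ?_⟩
      funext r
      simp only [hPhi, LinearMap.pi_apply, evalL_apply]
      rw [sum_extend hδn _ (fun i hi => by rw [dif_neg hi, zero_mul])]
      rw [← hv r]
      refine Finset.sum_congr rfl fun j _ => ?_
      congr 1
      rw [dif_pos (show ((Fin.castLE hδn j : Fin n) : ℕ) < δ from j.isLt)]
      exact congrArg v (Fin.ext rfl)
    have hrange : LinearMap.range Phi = ⊤ := LinearMap.range_eq_top.mpr hsurj
    have hrn := LinearMap.finrank_range_add_finrank_ker Phi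
    rw [hrange, finrank_top, Module.finrank_fin_fun, Module.finrank_fin_fun] at hrn
    omega
  -- 4: membership of δ+1
  · set ι1 : Fin (δ + 1) → Fin n := fun j => Fin.castLE hδn1 j with hι1
    set N' : Matrix (Fin δ) (Fin (δ + 1)) F := Matrix.of (fun r j => α r ^ ((ι1 j : ℕ))) with hN'
    have hker : LinearMap.ker N'.mulVecLin ≠ ⊥ := by
      apply LinearMap.ker_ne_bot_of_finrank_lt
      rw [Module.finrank_fin_fun, Module.finrank_fin_fun]
      omega
    obtain ⟨v, hvker, hvne⟩ := (Submodule.ne_bot_iff _).mp hker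
    have hveq : ∀ r : Fin δ, ∑ j : Fin (δ + 1), v j * α r ^ ((ι1 j : ℕ)) = 0 := by
      intro r
      have h1 := congrFun (LinearMap.mem_ker.mp hvker) r
      simp only [Matrix.mulVecLin_apply, Matrix.mulVec, dotProduct, hN',
        Matrix.of_apply, Pi.zero_apply] at h1
      rw [← h1]
      exact Finset.sum_congr rfl fun j _ => mul_comm _ _
    have hvall : ∀ j, v j ≠ 0 := by
      intro j0 hj0
      have hrest : ∀ r : Fin δ,
          ∑ i : Fin δ, v (j0.succAbove i) * α r ^ (((ι1 (j0.succAbove i)) : ℕ)) = 0 := by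
        intro r
        have h1 := hveq r
        rw [Fin.sum_univ_succAbove _ j0, hj0, zero_mul, zero_add] at h1
        exact h1
      have hinj2 : Function.Injective (fun i : Fin δ => ι1 (j0.succAbove i)) := by
        intro a b hab
        exact Fin.succAbove_right_injective (Fin.castLE_injective _ hab)
      have hvz := vand_kernel A z hAne hzinj α hαAz _ hinj2
        (fun i => v (j0.succAbove i)) hrest
      apply hvne
      funext j
      rcases eq_or_ne j j0 with hjj | hjj
      · rw [hjj]; exact hj0
      · obtain ⟨i, hi⟩ := Fin.exists_succAbove_eq hjj
        rw [← hi]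
        simpa using congrFun hvz i
    set c0 : Fin n → F := fun i => if h : (i : ℕ) < δ + 1 then v ⟨(i : ℕ), h⟩ else 0 with hc0
    have hc0val : ∀ j : Fin (δ + 1), c0 (Fin.castLE hδn1 j) = v j := by
      intro j
      simp only [hc0]
      rw [dif_pos (show ((Fin.castLE hδn1 j : Fin n) : ℕ) < δ + 1 from j.isLt)]
      exact congrArg v (Fin.ext rfl)
    have hc0mem : c0 ∈ LinearMap.ker Phi := by
      rw [hmem]
      intro r
      rw [sum_extend hδn1 _ (fun i hi => by
        simp only [hc0]; rw [dif_neg hi, zero_mul])]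
      rw [← hveq r]
      exact Finset.sum_congr rfl fun j _ => by rw [hc0val j]
    have hc0ne : c0 ≠ 0 := by
      intro hcontr
      obtain ⟨j, hj⟩ : ∃ j, v j ≠ 0 := Function.ne_iff.mp hvne
      apply hj
      rw [← hc0val j, hcontr]
      rfl
    have hc0norm : hammingNorm c0 = δ + 1 := by
      have hfilter : Finset.univ.filter (fun i => c0 i ≠ 0)
          = Finset.univ.map (Fin.castLEEmb hδn1) := by
        ext i
        simp only [Finset.mem_filter, Finset.mem_univ, true_and, Finset.mem_map,
          Fin.castLEEmb_apply]
        constructor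
        · intro hci
          have hlt : (i : ℕ) < δ + 1 := by
            by_contra hge
            exact hci (by simp only [hc0]; rw [dif_neg hge])
          exact ⟨⟨(i : ℕ), hlt⟩, Fin.ext rfl⟩
        · rintro ⟨j, rfl⟩
          rw [hc0val j]
          exact hvall j
      show (Finset.univ.filter (fun i => c0 i ≠ 0)).card = δ + 1
      rw [hfilter, Finset.card_map, Finset.card_univ, Fintype.card_fin]
    exact ⟨c0, hc0mem, hc0ne, hc0norm⟩
  -- 5: lower bound
  · rintro w ⟨c, hcC, hcne, rfl⟩
    by_contra hlt
    push_neg at hlt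
    exact hcne (hzero c hcC (by omega))
end
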